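/- arXiv:2101.11897 — 3 statements merged into one kernel-verified Lean document; each statement's English description precedes it below -/
import Mathlib

section
/- Let d, L, n ∈ ℕ, let Φ¹,…,Φⁿ be neural networks with L layers, d-dimensional input and equal output dimensions, let D₁,…,Dₙ be d×d real matrices, c₁,…,cₙ ∈ ℝ^d and w₁,…,wₙ ∈ ℝ. Then there exists a neural network ψ with L layers and d-dimensional input such that R(ψ)(x) = Σ_{i=1}^n wᵢ R(Φⁱ)(Dᵢ x + cᵢ) for all x ∈ ℝ^d, and M_j(ψ) ≤ Σ_{i=1}^n M_j(Φⁱ) for j = 2,…,L. If, in addition, D₁,…,Dₙ are diagonal matrices and c₁ = ⋯ = cₙ = 0, then M(ψ) ≤ Σ_{i=1}^n M(Φⁱ). -/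
open MeasureTheory

/-- A feedforward neural network: `L` is the number of layers, `dims l` the width of
the `l`-th layer (`dims 0` is the input dimension, `dims L` the output dimension),
and `A l`, `b l` are the weight matrix and bias vector mapping layer `l` to layer `l+1`
(entries with indices beyond the declared dimensions are irrelevant). -/
structure NeuralNetwork where
  L : ℕ
  dims : ℕ → ℕ
  A : ℕ → ℕ → ℕ → ℝ
  b : ℕ → ℕ → ℝ

namespace NeuralNetwork

/-- The affine map of layer `l`. -/
noncomputable def affine (Φ : NeuralNetwork) (l : ℕ) (y : ℕ → ℝ) : ℕ → ℝ :=
  fun i => (∑ j ∈ Finset.range (Φ.dims l), Φ.A l i j * y j) + Φ.b l i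

/-- The hidden-layer values of the network `Φ` with activation `ϱ` on input `x`. -/
noncomputable def hidden (ϱ : ℝ → ℝ) (Φ : NeuralNetwork) (x : ℕ → ℝ) : ℕ → ℕ → ℝ
  | 0 => x
  | l + 1 => fun i => ϱ (Φ.affine l (hidden ϱ Φ x l) i)

/-- The realization `R(Φ)` of the network `Φ` with activation `ϱ`: the affine map of the
last layer applied to the activated hidden layers. -/
noncomputable def realize (ϱ : ℝ → ℝ) (Φ : NeuralNetwork) (x : ℕ → ℝ) : ℕ → ℝ :=
  Φ.affine (Φ.L - 1) (hidden ϱ Φ x (Φ.L - 1))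

open Classical in
/-- `Mlayer Φ l` is the number of nonzero weights of layer `l+1` (i.e. `M_{l+1}(Φ)` in
the paper's numbering `j = 1, …, L`). -/
noncomputable def Mlayer (Φ : NeuralNetwork) (l : ℕ) : ℕ :=
  ((Finset.range (Φ.dims (l + 1)) ×ˢ Finset.range (Φ.dims l)).filter
      (fun p => Φ.A l p.1 p.2 ≠ 0)).card
    + ((Finset.range (Φ.dims (l + 1))).filter (fun i => Φ.b l i ≠ 0)).card

/-- `M(Φ)`, the size (total number of nonzero weights) of the network `Φ`. -/
noncomputable def size (Φ : NeuralNetwork) : ℕ :=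
  ∑ l ∈ Finset.range Φ.L, Φ.Mlayer l

/-- Embed a `d`-dimensional input vector into `ℕ → ℝ`. -/
def toInput {d : ℕ} (x : Fin d → ℝ) : ℕ → ℝ :=
  fun j => if h : j < d then x ⟨j, h⟩ else 0

/-- The realization of a network with scalar (1-dimensional) input and output,
as a function `ℝ → ℝ`. -/
noncomputable def realize1 (ϱ : ℝ → ℝ) (Φ : NeuralNetwork) (s : ℝ) : ℝ :=
  Φ.realize ϱ (toInput (fun _ : Fin 1 => s)) 0

/-- The realization of a network with `d`-dimensional input and scalar output,
as a function `(Fin d → ℝ) → ℝ`. -/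
noncomputable def realizeD (ϱ : ℝ → ℝ) (Φ : NeuralNetwork) {d : ℕ} (x : Fin d → ℝ) : ℝ :=
  Φ.realize ϱ (toInput x) 0

end NeuralNetwork

/-- The ReLU activation function. -/
noncomputable def relu : ℝ → ℝ := fun x => max x 0

open Finset in
lemma card_helper {α β : Type*} [DecidableEq α] {s t₁ : Finset α} {t₂ : Finset β} (f : β → α)
    (h : s ⊆ t₁ ∪ t₂.image f) : s.card ≤ t₁.card + t₂.card :=
  (Finset.card_le_card h).trans ((Finset.card_union_le _ _).trans
    (by gcongr; exact Finset.card_image_le))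

open NeuralNetwork in
lemma transform (ϱ : ℝ → ℝ) (d L : ℕ) (Φ : NeuralNetwork)
    (hLΦ : Φ.L = L) (hin : Φ.dims 0 = d)
    (D : Matrix (Fin d) (Fin d) ℝ) (c : Fin d → ℝ) (w : ℝ) :
    ∃ ρ : NeuralNetwork, ρ.L = L ∧ ρ.dims = Φ.dims ∧
      (∀ x : Fin d → ℝ, ∀ k, ρ.realize ϱ (toInput x) k
          = w * Φ.realize ϱ (toInput (D.mulVec x + c)) k) ∧
      (∀ l, 1 ≤ l → ρ.Mlayer l ≤ Φ.Mlayer l) ∧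
      (D.IsDiag → c = 0 → ρ.Mlayer 0 ≤ Φ.Mlayer 0) := by
  classical
  set s : ℕ → ℝ := fun l => if l = L - 1 then w else 1 with hs
  set ρ : NeuralNetwork := ⟨L, Φ.dims,
    fun l i j => s l * (if l = 0 then
        (if h : j < d then ∑ k : Fin d, Φ.A 0 i (k : ℕ) * D k ⟨j, h⟩ else 0)
      else Φ.A l i j),
    fun l i => s l * (if l = 0 then
        (∑ k : Fin d, Φ.A 0 i (k : ℕ) * c k) + Φ.b 0 i
      else Φ.b l i)⟩ with hρ
  have hA0 : ∀ i j (h : j < d),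
      ρ.A 0 i j = s 0 * ∑ k : Fin d, Φ.A 0 i (k : ℕ) * D k ⟨j, h⟩ := by
    intro i j h
    show s 0 * _ = _
    rw [if_pos rfl, dif_pos h]
  have hb0 : ∀ i, ρ.b 0 i = s 0 * ((∑ k : Fin d, Φ.A 0 i (k : ℕ) * c k) + Φ.b 0 i) := by
    intro i
    show s 0 * _ = _
    rw [if_pos rfl]
  have hAl : ∀ l, l ≠ 0 → ∀ i j, ρ.A l i j = s l * Φ.A l i j := by
    intro l hl i j
    show s l * _ = _
    rw [if_neg hl]
  have hbl : ∀ l, l ≠ 0 → ∀ i, ρ.b l i = s l * Φ.b l i := by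
    intro l hl i
    show s l * _ = _
    rw [if_neg hl]
  have factl : ∀ l, l ≠ 0 → ∀ (y : ℕ → ℝ) i, ρ.affine l y i = s l * Φ.affine l y i := by
    intro l hl y i
    show (∑ j ∈ Finset.range (Φ.dims l), ρ.A l i j * y j) + ρ.b l i
      = s l * ((∑ j ∈ Finset.range (Φ.dims l), Φ.A l i j * y j) + Φ.b l i)
    rw [hbl l hl, mul_add, Finset.mul_sum]
    congr 1
    apply Finset.sum_congr rfl
    intro j _
    rw [hAl l hl]
    ring
  refine ⟨ρ, rfl, rfl, ?_, ?_, ?_⟩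
  · intro x k
    set x' : Fin d → ℝ := D.mulVec x + c with hx'
    have hx'j : ∀ j : Fin d, x' j = (∑ k : Fin d, D j k * x k) + c j := by
      intro j; simp [hx', Matrix.mulVec, dotProduct]
    have fact1 : ∀ i, ρ.affine 0 (toInput x) i = s 0 * Φ.affine 0 (toInput x') i := by
      intro i
      show (∑ j ∈ Finset.range (ρ.dims 0), ρ.A 0 i j * toInput x j) + ρ.b 0 i
        = s 0 * ((∑ j ∈ Finset.range (Φ.dims 0), Φ.A 0 i j * toInput x' j) + Φ.b 0 i)
      have hρd : ρ.dims 0 = d := hin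
      rw [hρd, Finset.sum_range fun j => ρ.A 0 i j * toInput x j,
        Finset.sum_range fun j => Φ.A 0 i j * toInput x' j, hb0]
      have e1 : ∀ j : Fin d, ρ.A 0 i (j : ℕ) * toInput x (j : ℕ)
          = (s 0 * ∑ k : Fin d, Φ.A 0 i (k : ℕ) * D k j) * x j := by
        intro j
        rw [hA0 i j j.isLt]
        simp [toInput]
      have e2 : ∀ j : Fin d, Φ.A 0 i (j : ℕ) * toInput x' (j : ℕ)
          = Φ.A 0 i (j : ℕ) * ((∑ k : Fin d, D j k * x k) + c j) := by
        intro j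
        rw [← hx'j]
        simp [toInput]
      rw [Finset.sum_congr rfl fun j _ => e1 j, Finset.sum_congr rfl fun j _ => e2 j]
      simp only [Finset.sum_mul, Finset.mul_sum, mul_add, add_mul, Finset.sum_add_distrib]
      rw [Finset.sum_comm]
      ring_nf
    have hidEq : ∀ l, 1 ≤ l → l ≤ L - 1 → ∀ i,
        hidden ϱ ρ (toInput x) l i = hidden ϱ Φ (toInput x') l i := by
      intro l
      induction l with
      | zero => omega
      | succ l ih =>
        intro _ hle i
        show ϱ (ρ.affine l (hidden ϱ ρ (toInput x) l) i)
          = ϱ (Φ.affine l (hidden ϱ Φ (toInput x') l) i)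
        by_cases hl0 : l = 0
        · subst hl0
          show ϱ (ρ.affine 0 (toInput x) i) = ϱ (Φ.affine 0 (hidden ϱ Φ (toInput x') 0) i)
          rw [fact1]
          have hs0 : s 0 = 1 := if_neg (by omega)
          rw [hs0, one_mul]
          rfl
        · have hy : hidden ϱ ρ (toInput x) l = hidden ϱ Φ (toInput x') l :=
            funext (ih (by omega) (by omega))
          rw [hy, factl l hl0]
          have hsl : s l = 1 := if_neg (by omega)
          rw [hsl, one_mul]
    by_cases hL1 : L ≤ 1
    · have hL0 : L - 1 = 0 := by omega
      show ρ.affine (L - 1) (hidden ϱ ρ (toInput x) (L - 1)) k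
        = w * Φ.affine (Φ.L - 1) (hidden ϱ Φ (toInput x') (Φ.L - 1)) k
      rw [hLΦ, hL0]
      show ρ.affine 0 (toInput x) k = w * Φ.affine 0 (toInput x') k
      rw [fact1]
      have hs0 : s 0 = w := if_pos (by omega)
      rw [hs0]
    · show ρ.affine (L - 1) (hidden ϱ ρ (toInput x) (L - 1)) k
        = w * Φ.affine (Φ.L - 1) (hidden ϱ Φ (toInput x') (Φ.L - 1)) k
      rw [hLΦ]
      have hy : hidden ϱ ρ (toInput x) (L - 1) = hidden ϱ Φ (toInput x') (L - 1) :=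
        funext (hidEq (L - 1) (by omega) le_rfl)
      rw [hy, factl (L - 1) (by omega)]
      have hsw : s (L - 1) = w := if_pos rfl
      rw [hsw]
  · intro l hl
    apply Nat.add_le_add
    · apply Finset.card_le_card
      intro p hp
      simp only [Finset.mem_filter] at hp ⊢
      refine ⟨hp.1, fun h0 => hp.2 ?_⟩
      show ρ.A l p.1 p.2 = 0
      rw [hAl l (by omega), h0, mul_zero]
    · apply Finset.card_le_card
      intro i hi
      simp only [Finset.mem_filter] at hi ⊢
      refine ⟨hi.1, fun h0 => hi.2 ?_⟩
      show ρ.b l i = 0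
      rw [hbl l (by omega), h0, mul_zero]
  · intro hdiag hc0
    apply Nat.add_le_add
    · apply Finset.card_le_card
      intro p hp
      simp only [Finset.mem_filter, Finset.mem_product, Finset.mem_range] at hp ⊢
      refine ⟨hp.1, fun h0 => hp.2 ?_⟩
      have hlt : p.2 < d := by rw [← hin]; exact hp.1.2
      show ρ.A 0 p.1 p.2 = 0
      rw [hA0 p.1 p.2 hlt]
      have hsum : ∑ k : Fin d, Φ.A 0 p.1 (k : ℕ) * D k ⟨p.2, hlt⟩
          = Φ.A 0 p.1 (((⟨p.2, hlt⟩ : Fin d)) : ℕ) * D ⟨p.2, hlt⟩ ⟨p.2, hlt⟩ :=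
        Finset.sum_eq_single _ (fun k _ hk => by rw [hdiag hk, mul_zero])
          (fun hmem => absurd (Finset.mem_univ _) hmem)
      rw [hsum]
      simp only [Fin.val_mk]
      rw [h0, zero_mul, mul_zero]
    · apply Finset.card_le_card
      intro i hi
      simp only [Finset.mem_filter] at hi ⊢
      refine ⟨hi.1, fun h0 => hi.2 ?_⟩
      show ρ.b 0 i = 0
      rw [hb0, hc0]
      simp [h0]

open Classical in
lemma grid_le {B A1 A2 : ℕ → ℕ → ℝ} {R C R1 C1 R2 C2 : ℕ} (r s : ℕ)
    (hsplit : ∀ i j, i < R → j < C → B i j ≠ 0 →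
      (i < R1 ∧ j < C1 ∧ A1 i j ≠ 0)
        ∨ (i - r < R2 ∧ j - s < C2 ∧ r ≤ i ∧ s ≤ j ∧ A2 (i - r) (j - s) ≠ 0)) :
    ((Finset.range R ×ˢ Finset.range C).filter (fun p => B p.1 p.2 ≠ 0)).card
      ≤ ((Finset.range R1 ×ˢ Finset.range C1).filter (fun p => A1 p.1 p.2 ≠ 0)).card
        + ((Finset.range R2 ×ˢ Finset.range C2).filter (fun p => A2 p.1 p.2 ≠ 0)).card := by
  apply card_helper (fun p : ℕ × ℕ => (p.1 + r, p.2 + s))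
  intro p hp
  simp only [Finset.mem_filter, Finset.mem_product, Finset.mem_range, Finset.mem_union,
    Finset.mem_image] at hp ⊢
  obtain ⟨⟨hiR, hjC⟩, hB⟩ := hp
  rcases hsplit p.1 p.2 hiR hjC hB with ⟨h1, h2, h3⟩ | ⟨h1, h2, h3, h4, h5⟩
  · exact Or.inl ⟨⟨h1, h2⟩, h3⟩
  · refine Or.inr ⟨(p.1 - r, p.2 - s), ⟨⟨h1, h2⟩, h5⟩, ?_⟩
    have : p.1 - r + r = p.1 := by omega
    have h' : p.2 - s + s = p.2 := by omega
    simp [this, h']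

open Classical in
lemma vec_le {B A1 A2 : ℕ → ℝ} {R R1 R2 : ℕ} (r : ℕ)
    (hsplit : ∀ i, i < R → B i ≠ 0 →
      (i < R1 ∧ A1 i ≠ 0) ∨ (i - r < R2 ∧ r ≤ i ∧ A2 (i - r) ≠ 0)) :
    ((Finset.range R).filter (fun i => B i ≠ 0)).card
      ≤ ((Finset.range R1).filter (fun i => A1 i ≠ 0)).card
        + ((Finset.range R2).filter (fun i => A2 i ≠ 0)).card := by
  apply card_helper (fun i : ℕ => i + r)
  intro i hi
  simp only [Finset.mem_filter, Finset.mem_range, Finset.mem_union, Finset.mem_image] at hi ⊢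
  obtain ⟨hiR, hB⟩ := hi
  rcases hsplit i hiR hB with ⟨h1, h2⟩ | ⟨h1, h2, h3⟩
  · exact Or.inl ⟨h1, h2⟩
  · exact Or.inr ⟨i - r, ⟨h1, h3⟩, by omega⟩

open NeuralNetwork in
lemma affine_congr (N : NeuralNetwork) (l : ℕ) (y z : ℕ → ℝ)
    (h : ∀ j < N.dims l, y j = z j) (i : ℕ) : N.affine l y i = N.affine l z i := by
  show (∑ j ∈ Finset.range (N.dims l), N.A l i j * y j) + N.b l i = _
  congr 1
  apply Finset.sum_congr rfl
  intro j hj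
  rw [h j (Finset.mem_range.mp hj)]

open NeuralNetwork in
lemma parallel2 (ϱ : ℝ → ℝ) (d L m : ℕ) (hL : 1 ≤ L) (Ψ Φ : NeuralNetwork)
    (h1 : Ψ.L = L) (h2 : Φ.L = L) (hi1 : Ψ.dims 0 = d) (hi2 : Φ.dims 0 = d)
    (ho1 : Ψ.dims L = m) (ho2 : Φ.dims L = m) :
    ∃ P : NeuralNetwork, P.L = L ∧ P.dims 0 = d ∧ P.dims L = m ∧
      (∀ x : Fin d → ℝ, ∀ k, P.realize ϱ (toInput x) k
          = Ψ.realize ϱ (toInput x) k + Φ.realize ϱ (toInput x) k) ∧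
      (∀ l, l < L → P.Mlayer l ≤ Ψ.Mlayer l + Φ.Mlayer l) := by
  classical
  by_cases hL1 : L = 1
  · -- one-layer networks: add weights
    subst hL1
    set P : NeuralNetwork := ⟨1, Ψ.dims,
      fun l i j => Ψ.A l i j + Φ.A l i j, fun l i => Ψ.b l i + Φ.b l i⟩ with hP
    refine ⟨P, rfl, hi1, ho1, ?_, ?_⟩
    · intro x k
      show P.affine 0 (toInput x) k
        = Ψ.affine (Ψ.L - 1) (hidden ϱ Ψ (toInput x) (Ψ.L - 1)) k
          + Φ.affine (Φ.L - 1) (hidden ϱ Φ (toInput x) (Φ.L - 1)) k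
      rw [h1, h2]
      show (∑ j ∈ Finset.range (Ψ.dims 0), (Ψ.A 0 k j + Φ.A 0 k j) * toInput x j)
            + (Ψ.b 0 k + Φ.b 0 k)
        = ((∑ j ∈ Finset.range (Ψ.dims 0), Ψ.A 0 k j * toInput x j) + Ψ.b 0 k)
          + ((∑ j ∈ Finset.range (Φ.dims 0), Φ.A 0 k j * toInput x j) + Φ.b 0 k)
      rw [hi1, hi2]
      rw [Finset.sum_congr rfl (fun j _ => add_mul (Ψ.A 0 k j) (Φ.A 0 k j) (toInput x j)),
        Finset.sum_add_distrib]
      ring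
    · intro l hl
      interval_cases l
      have e1 : P.dims (0 + 1) = Φ.dims (0 + 1) := by
        show Ψ.dims (0 + 1) = Φ.dims (0 + 1)
        rw [show (0 + 1 : ℕ) = 1 from rfl, ho1, ho2]
      have e0 : P.dims 0 = Φ.dims 0 := by
        show Ψ.dims 0 = Φ.dims 0
        rw [hi1, hi2]
      unfold NeuralNetwork.Mlayer
      refine le_trans (Nat.add_le_add ?_ ?_) (le_of_eq (add_add_add_comm _ _ _ _).symm)
      · refine grid_le 0 0 ?_
        intro i j hiR hjC hB
        by_cases hA : Ψ.A 0 i j ≠ 0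
        · exact Or.inl ⟨hiR, hjC, hA⟩
        · push_neg at hA
          refine Or.inr ⟨by omega, by omega, by omega, by omega, ?_⟩
          have hPA : P.A 0 i j = Ψ.A 0 i j + Φ.A 0 i j := rfl
          rw [hPA, hA, zero_add] at hB
          have hij : i - 0 = i := by omega
          have hj0 : j - 0 = j := by omega
          rw [hij, hj0]
          exact hB
      · refine vec_le 0 ?_
        intro i hiR hB
        by_cases hb : Ψ.b 0 i ≠ 0
        · exact Or.inl ⟨hiR, hb⟩
        · push_neg at hb
          refine Or.inr ⟨by omega, by omega, ?_⟩
          have hPb : P.b 0 i = Ψ.b 0 i + Φ.b 0 i := rfl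
          rw [hPb, hb, zero_add] at hB
          have hij : i - 0 = i := by omega
          rw [hij]
          exact hB
  · have hL2 : 2 ≤ L := by omega
    set P : NeuralNetwork := ⟨L,
      fun l => if l = 0 then d else if l = L then m else Ψ.dims l + Φ.dims l,
      fun l i j =>
        if l = 0 then (if i < Ψ.dims 1 then Ψ.A 0 i j else Φ.A 0 (i - Ψ.dims 1) j)
        else if l = L - 1 then
          (if j < Ψ.dims (L - 1) then Ψ.A l i j else Φ.A l i (j - Ψ.dims (L - 1)))
        else if i < Ψ.dims (l + 1) then (if j < Ψ.dims l then Ψ.A l i j else 0)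
        else (if j < Ψ.dims l then 0 else Φ.A l (i - Ψ.dims (l + 1)) (j - Ψ.dims l)),
      fun l i =>
        if l = L - 1 then Ψ.b l i + Φ.b l i
        else if i < Ψ.dims (l + 1) then Ψ.b l i else Φ.b l (i - Ψ.dims (l + 1))⟩ with hP
    have hd0 : P.dims 0 = d := by
      show (if 0 = 0 then d else if 0 = L then m else Ψ.dims 0 + Φ.dims 0) = d
      rw [if_pos rfl]
    have hdL : P.dims L = m := by
      change (if L = 0 then _ else _) = _
      rw [if_neg (show ¬(L = 0) by omega)]
      change (if L = L then _ else _) = _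
      rw [if_pos rfl]
    have hdmid : ∀ t, t ≠ 0 → t ≠ L → P.dims t = Ψ.dims t + Φ.dims t := by
      intro t ht0 htL
      change (if t = 0 then _ else _) = _
      rw [if_neg ht0]
      change (if t = L then _ else _) = _
      rw [if_neg htL]
    have hPA0 : ∀ i j, P.A 0 i j
        = if i < Ψ.dims 1 then Ψ.A 0 i j else Φ.A 0 (i - Ψ.dims 1) j :=
      fun i j => rfl
    have hPb : ∀ l, l ≠ L - 1 → ∀ i, P.b l i
        = if i < Ψ.dims (l + 1) then Ψ.b l i else Φ.b l (i - Ψ.dims (l + 1)) := by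
      intro l hl i
      change (if l = L - 1 then _ else _) = _
      rw [if_neg hl]
    have hPAmid : ∀ l, l ≠ 0 → l ≠ L - 1 → ∀ i j, P.A l i j
        = if i < Ψ.dims (l + 1) then (if j < Ψ.dims l then Ψ.A l i j else 0)
          else (if j < Ψ.dims l then 0 else Φ.A l (i - Ψ.dims (l + 1)) (j - Ψ.dims l)) := by
      intro l hl0 hlL i j
      change (if l = 0 then _ else _) = _
      rw [if_neg hl0]
      change (if l = L - 1 then _ else _) = _
      rw [if_neg hlL]
    have hPAlast : ∀ i j, P.A (L - 1) i j
        = if j < Ψ.dims (L - 1) then Ψ.A (L - 1) i j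
          else Φ.A (L - 1) i (j - Ψ.dims (L - 1)) := by
      intro i j
      change (if L - 1 = 0 then _ else _) = _
      rw [if_neg (show ¬(L - 1 = 0) by omega)]
      change (if L - 1 = L - 1 then _ else _) = _
      rw [if_pos rfl]
    have hPblast : ∀ i, P.b (L - 1) i = Ψ.b (L - 1) i + Φ.b (L - 1) i := by
      intro i
      change (if L - 1 = L - 1 then _ else _) = _
      rw [if_pos rfl]
    have haff0 : ∀ (x : Fin d → ℝ) i, P.affine 0 (toInput x) i
        = if i < Ψ.dims 1 then Ψ.affine 0 (toInput x) i
          else Φ.affine 0 (toInput x) (i - Ψ.dims 1) := by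
      intro x i
      by_cases hi : i < Ψ.dims 1
      · rw [if_pos hi]
        show (∑ j ∈ Finset.range (P.dims 0), P.A 0 i j * toInput x j) + P.b 0 i
          = (∑ j ∈ Finset.range (Ψ.dims 0), Ψ.A 0 i j * toInput x j) + Ψ.b 0 i
        rw [hd0, hi1]
        congr 1
        · refine Finset.sum_congr rfl fun j _ => ?_
          rw [hPA0, if_pos hi]
        · rw [hPb 0 (by omega), if_pos hi]
      · rw [if_neg hi]
        show (∑ j ∈ Finset.range (P.dims 0), P.A 0 i j * toInput x j) + P.b 0 i
          = (∑ j ∈ Finset.range (Φ.dims 0), Φ.A 0 (i - Ψ.dims 1) j * toInput x j)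
            + Φ.b 0 (i - Ψ.dims 1)
        rw [hd0, hi2]
        congr 1
        · refine Finset.sum_congr rfl fun j _ => ?_
          rw [hPA0, if_neg hi]
        · rw [hPb 0 (by omega), if_neg hi]
    have haffmid : ∀ l, 1 ≤ l → l + 1 ≤ L - 1 → ∀ (y : ℕ → ℝ) i,
        P.affine l y i = if i < Ψ.dims (l + 1) then Ψ.affine l y i
          else Φ.affine l (fun j => y (Ψ.dims l + j)) (i - Ψ.dims (l + 1)) := by
      intro l hl1 hl2 y i
      show (∑ j ∈ Finset.range (P.dims l), P.A l i j * y j) + P.b l i = _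
      rw [hdmid l (by omega) (by omega),
        Finset.sum_range_add (fun j => P.A l i j * y j) (Ψ.dims l) (Φ.dims l)]
      by_cases hi : i < Ψ.dims (l + 1)
      · rw [if_pos hi]
        have e1 : ∑ j ∈ Finset.range (Ψ.dims l), P.A l i j * y j
            = ∑ j ∈ Finset.range (Ψ.dims l), Ψ.A l i j * y j := by
          refine Finset.sum_congr rfl fun j hj => ?_
          rw [hPAmid l (by omega) (by omega), if_pos hi, if_pos (Finset.mem_range.mp hj)]
        have e2 : ∑ j ∈ Finset.range (Φ.dims l),
            P.A l i (Ψ.dims l + j) * y (Ψ.dims l + j) = 0 := by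
          refine Finset.sum_eq_zero fun j _ => ?_
          rw [hPAmid l (by omega) (by omega), if_pos hi, if_neg (by omega), zero_mul]
        rw [e1, e2, hPb l (by omega), if_pos hi, add_zero]
        rfl
      · rw [if_neg hi]
        have e1 : ∑ j ∈ Finset.range (Ψ.dims l), P.A l i j * y j = 0 := by
          refine Finset.sum_eq_zero fun j hj => ?_
          rw [hPAmid l (by omega) (by omega), if_neg hi,
            if_pos (Finset.mem_range.mp hj), zero_mul]
        have e2 : ∑ j ∈ Finset.range (Φ.dims l),
            P.A l i (Ψ.dims l + j) * y (Ψ.dims l + j)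
            = ∑ j ∈ Finset.range (Φ.dims l),
              Φ.A l (i - Ψ.dims (l + 1)) j * y (Ψ.dims l + j) := by
          refine Finset.sum_congr rfl fun j hj => ?_
          rw [hPAmid l (by omega) (by omega), if_neg hi, if_neg (by omega),
            Nat.add_sub_cancel_left]
        rw [e1, e2, hPb l (by omega), if_neg hi, zero_add]
        rfl
    have hafflast : ∀ (y : ℕ → ℝ) k, P.affine (L - 1) y k
        = Ψ.affine (L - 1) y k
          + Φ.affine (L - 1) (fun j => y (Ψ.dims (L - 1) + j)) k := by
      intro y k
      show (∑ j ∈ Finset.range (P.dims (L - 1)), P.A (L - 1) k j * y j) + P.b (L - 1) k = _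
      rw [hdmid (L - 1) (by omega) (by omega),
        Finset.sum_range_add (fun j => P.A (L - 1) k j * y j) (Ψ.dims (L - 1)) (Φ.dims (L - 1)),
        hPblast]
      have e1 : ∑ j ∈ Finset.range (Ψ.dims (L - 1)), P.A (L - 1) k j * y j
          = ∑ j ∈ Finset.range (Ψ.dims (L - 1)), Ψ.A (L - 1) k j * y j :=
        Finset.sum_congr rfl fun j hj => by rw [hPAlast, if_pos (Finset.mem_range.mp hj)]
      have e2 : ∑ j ∈ Finset.range (Φ.dims (L - 1)),
          P.A (L - 1) k (Ψ.dims (L - 1) + j) * y (Ψ.dims (L - 1) + j)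
          = ∑ j ∈ Finset.range (Φ.dims (L - 1)),
            Φ.A (L - 1) k j * y (Ψ.dims (L - 1) + j) :=
        Finset.sum_congr rfl fun j hj => by
          rw [hPAlast, if_neg (by omega), Nat.add_sub_cancel_left]
      rw [e1, e2]
      show _ = (_ + _) + (_ + _)
      ring
    have key : ∀ (x : Fin d → ℝ) l, 1 ≤ l → l ≤ L - 1 → ∀ i,
        hidden ϱ P (toInput x) l i
          = if i < Ψ.dims l then hidden ϱ Ψ (toInput x) l i
            else hidden ϱ Φ (toInput x) l (i - Ψ.dims l) := by
      intro x l
      induction l with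
      | zero => omega
      | succ l ih =>
        intro _ hle i
        by_cases hl0 : l = 0
        · subst hl0
          show ϱ (P.affine 0 (toInput x) i) = _
          rw [haff0 x i]
          by_cases hi : i < Ψ.dims 1
          · rw [if_pos hi, if_pos (show i < Ψ.dims (0 + 1) from hi)]
            rfl
          · rw [if_neg hi, if_neg (show ¬ i < Ψ.dims (0 + 1) from hi)]
            rfl
        · have hy : hidden ϱ P (toInput x) l = fun j =>
              if j < Ψ.dims l then hidden ϱ Ψ (toInput x) l j
              else hidden ϱ Φ (toInput x) l (j - Ψ.dims l) :=
            funext (ih (by omega) (by omega))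
          show ϱ (P.affine l (hidden ϱ P (toInput x) l) i) = _
          rw [hy, haffmid l (by omega) (by omega)]
          by_cases hi : i < Ψ.dims (l + 1)
          · rw [if_pos hi, if_pos hi]
            have e := affine_congr Ψ l
              (fun j => if j < Ψ.dims l then hidden ϱ Ψ (toInput x) l j
                else hidden ϱ Φ (toInput x) l (j - Ψ.dims l))
              (hidden ϱ Ψ (toInput x) l) (fun j hj => if_pos hj) i
            rw [e]
            rfl
          · rw [if_neg hi, if_neg hi]
            have e := affine_congr Φ l
              (fun j => (fun j' => if j' < Ψ.dims l then hidden ϱ Ψ (toInput x) l j'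
                else hidden ϱ Φ (toInput x) l (j' - Ψ.dims l)) (Ψ.dims l + j))
              (hidden ϱ Φ (toInput x) l)
              (fun j hj => by
                show (if Ψ.dims l + j < Ψ.dims l
                    then hidden ϱ Ψ (toInput x) l (Ψ.dims l + j)
                    else hidden ϱ Φ (toInput x) l (Ψ.dims l + j - Ψ.dims l))
                  = hidden ϱ Φ (toInput x) l j
                rw [if_neg (show ¬ Ψ.dims l + j < Ψ.dims l by omega),
                  Nat.add_sub_cancel_left])
              (i - Ψ.dims (l + 1))
            rw [e]
            rfl
    refine ⟨P, rfl, hd0, hdL, ?_, ?_⟩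
    · intro x k
      show P.affine (L - 1) (hidden ϱ P (toInput x) (L - 1)) k
        = Ψ.affine (Ψ.L - 1) (hidden ϱ Ψ (toInput x) (Ψ.L - 1)) k
          + Φ.affine (Φ.L - 1) (hidden ϱ Φ (toInput x) (Φ.L - 1)) k
      rw [h1, h2]
      have hy : hidden ϱ P (toInput x) (L - 1) = fun j =>
          if j < Ψ.dims (L - 1) then hidden ϱ Ψ (toInput x) (L - 1) j
          else hidden ϱ Φ (toInput x) (L - 1) (j - Ψ.dims (L - 1)) :=
        funext (key x (L - 1) (by omega) le_rfl)
      rw [hy, hafflast]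
      congr 1
      · exact affine_congr Ψ (L - 1) _ _ (fun j hj => if_pos hj) k
      · exact affine_congr Φ (L - 1) _ _
          (fun j hj => by
            show (if Ψ.dims (L - 1) + j < Ψ.dims (L - 1)
                then hidden ϱ Ψ (toInput x) (L - 1) (Ψ.dims (L - 1) + j)
                else hidden ϱ Φ (toInput x) (L - 1) (Ψ.dims (L - 1) + j - Ψ.dims (L - 1)))
              = hidden ϱ Φ (toInput x) (L - 1) j
            rw [if_neg (show ¬ Ψ.dims (L - 1) + j < Ψ.dims (L - 1) by omega),
              Nat.add_sub_cancel_left]) k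
    · intro l hlL
      unfold NeuralNetwork.Mlayer
      refine le_trans (Nat.add_le_add ?_ ?_) (le_of_eq (add_add_add_comm _ _ _ _).symm)
      · by_cases hl0 : l = 0
        · subst hl0
          refine grid_le (Ψ.dims (0 + 1)) 0 ?_
          intro i j hiR hjC hB
          have hdd : P.dims (0 + 1) = Ψ.dims (0 + 1) + Φ.dims (0 + 1) :=
            hdmid (0 + 1) (by omega) (by omega)
          have hdd0 : P.dims 0 = d := hd0
          have h10 : Ψ.dims 0 = d := hi1
          have h20 : Φ.dims 0 = d := hi2
          rw [hPA0] at hB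
          by_cases hi : i < Ψ.dims 1
          · rw [if_pos hi] at hB
            exact Or.inl ⟨hi, by omega, hB⟩
          · rw [if_neg hi] at hB
            have hone : Ψ.dims (0 + 1) = Ψ.dims 1 := rfl
            refine Or.inr ⟨by omega, by omega, by omega, by omega, ?_⟩
            have hjj : j - 0 = j := by omega
            rw [hjj, hone]
            exact hB
        · by_cases hlL1 : l = L - 1
          · subst hlL1
            refine grid_le 0 (Ψ.dims (L - 1)) ?_
            intro i j hiR hjC hB
            have hR : P.dims (L - 1 + 1) = m := by
              rw [show L - 1 + 1 = L by omega, hdL]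
            have hC : P.dims (L - 1) = Ψ.dims (L - 1) + Φ.dims (L - 1) :=
              hdmid _ (by omega) (by omega)
            have h1' : Ψ.dims (L - 1 + 1) = m := by
              rw [show L - 1 + 1 = L by omega, ho1]
            have h2' : Φ.dims (L - 1 + 1) = m := by
              rw [show L - 1 + 1 = L by omega, ho2]
            rw [hPAlast] at hB
            by_cases hj : j < Ψ.dims (L - 1)
            · rw [if_pos hj] at hB
              exact Or.inl ⟨by omega, hj, hB⟩
            · rw [if_neg hj] at hB
              refine Or.inr ⟨by omega, by omega, by omega, by omega, ?_⟩
              have hii : i - 0 = i := by omega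
              rw [hii]
              exact hB
          · refine grid_le (Ψ.dims (l + 1)) (Ψ.dims l) ?_
            intro i j hiR hjC hB
            have hR : P.dims (l + 1) = Ψ.dims (l + 1) + Φ.dims (l + 1) :=
              hdmid _ (by omega) (by omega)
            have hC : P.dims l = Ψ.dims l + Φ.dims l :=
              hdmid _ (by omega) (by omega)
            rw [hPAmid l hl0 hlL1] at hB
            by_cases hi : i < Ψ.dims (l + 1)
            · rw [if_pos hi] at hB
              by_cases hj : j < Ψ.dims l
              · rw [if_pos hj] at hB
                exact Or.inl ⟨hi, hj, hB⟩
              · rw [if_neg hj] at hB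
                exact absurd rfl hB
            · rw [if_neg hi] at hB
              by_cases hj : j < Ψ.dims l
              · rw [if_pos hj] at hB
                exact absurd rfl hB
              · rw [if_neg hj] at hB
                exact Or.inr ⟨by omega, by omega, by omega, by omega, hB⟩
      · by_cases hlL1 : l = L - 1
        · subst hlL1
          refine vec_le 0 ?_
          intro i hiR hB
          rw [hPblast] at hB
          have hR : P.dims (L - 1 + 1) = m := by
            rw [show L - 1 + 1 = L by omega, hdL]
          have h1' : Ψ.dims (L - 1 + 1) = m := by
            rw [show L - 1 + 1 = L by omega, ho1]
          have h2' : Φ.dims (L - 1 + 1) = m := by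
            rw [show L - 1 + 1 = L by omega, ho2]
          by_cases hb : Ψ.b (L - 1) i ≠ 0
          · exact Or.inl ⟨by omega, hb⟩
          · push_neg at hb
            rw [hb, zero_add] at hB
            refine Or.inr ⟨by omega, by omega, ?_⟩
            have hii : i - 0 = i := by omega
            rw [hii]
            exact hB
        · refine vec_le (Ψ.dims (l + 1)) ?_
          intro i hiR hB
          rw [hPb l hlL1] at hB
          have hR : P.dims (l + 1) = Ψ.dims (l + 1) + Φ.dims (l + 1) :=
            hdmid _ (by omega) (by omega)
          by_cases hi : i < Ψ.dims (l + 1)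
          · rw [if_pos hi] at hB
            exact Or.inl ⟨hi, hB⟩
          · rw [if_neg hi] at hB
            exact Or.inr ⟨by omega, by omega, hB⟩

open NeuralNetwork in
lemma parallel_n (ϱ : ℝ → ℝ) (d L m : ℕ) (hL : 1 ≤ L) :
    ∀ (n : ℕ) (ρ : Fin n → NeuralNetwork),
      (∀ i, (ρ i).L = L) → (∀ i, (ρ i).dims 0 = d) → (∀ i, (ρ i).dims L = m) →
      ∃ ψ : NeuralNetwork, ψ.L = L ∧ ψ.dims 0 = d ∧ ψ.dims L = m ∧
        (∀ x : Fin d → ℝ, ∀ k, ψ.realize ϱ (toInput x) k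
            = ∑ i, (ρ i).realize ϱ (toInput x) k) ∧
        (∀ l, l < L → ψ.Mlayer l ≤ ∑ i, (ρ i).Mlayer l) := by
  intro n
  induction n with
  | zero =>
    intro ρ _ _ _
    refine ⟨⟨L, fun l => if l = 0 then d else if l = L then m else 0,
      fun _ _ _ => 0, fun _ _ => 0⟩, rfl, rfl, ?_, ?_, ?_⟩
    · show (if L = 0 then d else if L = L then m else 0) = m
      rw [if_neg (by omega), if_pos rfl]
    · intro x k
      show (∑ j ∈ Finset.range _, (0 : ℝ) * _) + 0 = _
      simp
    · intro l _
      unfold NeuralNetwork.Mlayer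
      simp
  | succ n ih =>
    intro ρ hLs hins houts
    obtain ⟨Ψ, hΨL, hΨ0, hΨm, hreal, hM⟩ := ih (fun i => ρ i.castSucc)
      (fun i => hLs _) (fun i => hins _) (fun i => houts _)
    obtain ⟨P, hPL, hP0, hPm, hreal2, hM2⟩ := parallel2 ϱ d L m hL Ψ (ρ (Fin.last n))
      hΨL (hLs _) hΨ0 (hins _) hΨm (houts _)
    refine ⟨P, hPL, hP0, hPm, ?_, ?_⟩
    · intro x k
      rw [hreal2 x k, hreal x k, Fin.sum_univ_castSucc]
    · intro l hl
      calc P.Mlayer l ≤ Ψ.Mlayer l + (ρ (Fin.last n)).Mlayer l := hM2 l hl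
        _ ≤ (∑ i : Fin n, (ρ i.castSucc).Mlayer l) + (ρ (Fin.last n)).Mlayer l :=
            Nat.add_le_add_right (hM l hl) _
        _ = ∑ i : Fin (n + 1), (ρ i).Mlayer l :=
            (Fin.sum_univ_castSucc (fun i => (ρ i).Mlayer l)).symm

open NeuralNetwork in
/-- Lemma 3.2 (parallelization/averaging of neural networks). -/
theorem statement0 (ϱ : ℝ → ℝ) (d L n : ℕ) (hL : 1 ≤ L)
    (Φ : Fin n → NeuralNetwork) (m : ℕ)
    (hΦL : ∀ i, (Φ i).L = L) (hΦin : ∀ i, (Φ i).dims 0 = d)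
    (hΦout : ∀ i, (Φ i).dims L = m)
    (D : Fin n → Matrix (Fin d) (Fin d) ℝ) (c : Fin n → Fin d → ℝ) (w : Fin n → ℝ) :
    ∃ ψ : NeuralNetwork, ψ.L = L ∧ ψ.dims 0 = d ∧ ψ.dims L = m ∧
      (∀ x : Fin d → ℝ, ∀ k < m,
        ψ.realize ϱ (toInput x) k
          = ∑ i, w i * (Φ i).realize ϱ (toInput ((D i).mulVec x + c i)) k) ∧
      (∀ l, 1 ≤ l → l < L → ψ.Mlayer l ≤ ∑ i, (Φ i).Mlayer l) ∧
      ((∀ i, (D i).IsDiag) → (∀ i, c i = 0) → ψ.size ≤ ∑ i, (Φ i).size) := by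
  choose ρ hρL hρdims hρreal hρM hρM0 using fun i : Fin n =>
    transform ϱ d L (Φ i) (hΦL i) (hΦin i) (D i) (c i) (w i)
  obtain ⟨ψ, hψL, hψ0, hψm, hreal, hM⟩ := parallel_n ϱ d L m hL n ρ hρL
    (fun i => by rw [hρdims i, hΦin i]) (fun i => by rw [hρdims i, hΦout i])
  refine ⟨ψ, hψL, hψ0, hψm, ?_, ?_, ?_⟩
  · intro x k _
    rw [hreal x k]
    exact Finset.sum_congr rfl fun i _ => hρreal i x k
  · intro l hl1 hlL
    exact (hM l hlL).trans (Finset.sum_le_sum fun i _ => hρM i l hl1)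
  · intro hdiag hc0
    have hsz : ψ.size = ∑ l ∈ Finset.range L, ψ.Mlayer l := by
      unfold NeuralNetwork.size
      rw [hψL]
    rw [hsz]
    calc ∑ l ∈ Finset.range L, ψ.Mlayer l
        ≤ ∑ l ∈ Finset.range L, ∑ i, (ρ i).Mlayer l :=
          Finset.sum_le_sum fun l hl => hM l (Finset.mem_range.mp hl)
      _ ≤ ∑ l ∈ Finset.range L, ∑ i, (Φ i).Mlayer l := by
          refine Finset.sum_le_sum fun l _ => Finset.sum_le_sum fun i _ => ?_
          rcases Nat.eq_zero_or_pos l with h0 | hpos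
          · subst h0
            exact hρM0 i (hdiag i) (hc0 i)
          · exact hρM i l hpos
      _ = ∑ i, ∑ l ∈ Finset.range L, (Φ i).Mlayer l := Finset.sum_comm
      _ = ∑ i, (Φ i).size := by
          refine Finset.sum_congr rfl fun i _ => ?_
          unfold NeuralNetwork.size
          rw [hΦL i]
end

section
/- Let T > 0, 0 < a < b < ∞, let X be a real-valued random variable with E[e^{2X}] < ∞, and define u(s) = E[φ(s e^X)] for s ∈ (0,∞). Suppose there exist constants c > 0, q ≥ 0 such that for every ε ∈ (0,1] there is a neural network φ_ε with scalar output satisfying: (i) |φ(s) − R(φ_ε)(s)| ≤ ε c (1 + |s|) for all s ∈ (0,∞); (ii) M(φ_ε) ≤ c ε^{−q}; (iii) R(φ_ε) is Lipschitz on ℝ with Lipschitz constant at most c. Then there exists κ ∈ [c,∞) (depending on a, b, T and the law of X) and, for every ε ∈ (0,1], a neural network ψ_ε such that M(ψ_ε) ≤ κ ε^{−2−q} and sup_{s ∈ [a,b]} |u(s) − R(ψ_ε)(s)| ≤ ε. -/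
open MeasureTheory

section NNAux
open NeuralNetwork

lemma sum_range_mul' (N d : ℕ) (f : ℕ → ℝ) :
    ∑ j ∈ Finset.range (N * d), f j
      = ∑ i ∈ Finset.range N, ∑ r ∈ Finset.range d, f (d * i + r) := by
  induction N with
  | zero => simp
  | succ n ih =>
      rw [Nat.succ_mul, Finset.sum_range_add, ih, Finset.sum_range_succ]
      congr 1
      exact Finset.sum_congr rfl fun r _ => by rw [Nat.mul_comm]

lemma card_le_mul_of_inj {α β : Type*} [DecidableEq α] [DecidableEq β]
    (s : Finset α) (t : Finset β) (N : ℕ)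
    (f : α → ℕ × β) (hmaps : ∀ x ∈ s, f x ∈ Finset.range N ×ˢ t)
    (hinj : ∀ x ∈ s, ∀ y ∈ s, f x = f y → x = y) :
    s.card ≤ N * t.card := by
  calc s.card ≤ (Finset.range N ×ˢ t).card :=
        Finset.card_le_card_of_injOn f hmaps hinj
    _ = N * t.card := by simp

/-- The parallelization of `N` scaled copies of a network. -/
noncomputable def parallel (Φ : NeuralNetwork) (N : ℕ) (t w : ℕ → ℝ) : NeuralNetwork where
  L := Φ.L
  dims := fun l => if l = 0 ∨ l = Φ.L then 1 else N * Φ.dims l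
  A := fun l p j =>
    if l = 0 then t (p / Φ.dims 1) * Φ.A 0 (p % Φ.dims 1) j
    else if l = Φ.L - 1 then
      w (j / Φ.dims (Φ.L - 1)) * Φ.A (Φ.L - 1) 0 (j % Φ.dims (Φ.L - 1))
    else if p / Φ.dims (l + 1) = j / Φ.dims l then
      Φ.A l (p % Φ.dims (l + 1)) (j % Φ.dims l) else 0
  b := fun l p =>
    if l = Φ.L - 1 then (∑ i ∈ Finset.range N, w i) * Φ.b (Φ.L - 1) 0
    else Φ.b l (p % Φ.dims (l + 1))

lemma parallel_hidden (Φ : NeuralNetwork) (hL : 2 ≤ Φ.L) (h0 : Φ.dims 0 = 1)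
    (N : ℕ) (t w : ℕ → ℝ) (ϱ : ℝ → ℝ) (s : ℝ) :
    ∀ l, 1 ≤ l → l ≤ Φ.L - 1 → ∀ k, k < N * Φ.dims l →
      hidden ϱ (parallel Φ N t w) (toInput (fun _ : Fin 1 => s)) l k
        = hidden ϱ Φ (toInput (fun _ : Fin 1 => s * t (k / Φ.dims l)))
            l (k % Φ.dims l) := by
  intro l hl
  induction l, hl using Nat.le_induction with
  | base =>
      intro _ k hk
      have hNd : 0 < N * Φ.dims 1 := lt_of_le_of_lt (Nat.zero_le k) hk
      have hd : 0 < Φ.dims 1 := Nat.pos_of_ne_zero (fun h => by simp [h] at hNd)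
      have hL1 : (0:ℕ) ≠ Φ.L - 1 := by omega
      show ϱ ((parallel Φ N t w).affine 0 (toInput (fun _ : Fin 1 => s)) k)
          = ϱ (Φ.affine 0 (toInput (fun _ : Fin 1 => s * t (k / Φ.dims 1)))
              (k % Φ.dims 1))
      congr 1
      have e1 : (parallel Φ N t w).dims 0 = 1 := by simp [parallel]
      have eA : (parallel Φ N t w).A 0 k 0
          = t (k / Φ.dims 1) * Φ.A 0 (k % Φ.dims 1) 0 := by simp [parallel]
      have eb : (parallel Φ N t w).b 0 k = Φ.b 0 (k % Φ.dims 1) := by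
        simp [parallel, hL1]
      simp only [affine, e1, h0, Finset.sum_range_one, eA, eb]
      simp [toInput]
      ring
  | succ l hl ih =>
      intro hle k hk
      have hNd : 0 < N * Φ.dims (l+1) := lt_of_le_of_lt (Nat.zero_le k) hk
      have hdl1 : 0 < Φ.dims (l+1) := Nat.pos_of_ne_zero (fun h => by simp [h] at hNd)
      have hi0 : k / Φ.dims (l+1) < N := Nat.div_lt_of_lt_mul (by rwa [Nat.mul_comm] at hk)
      have hl0 : l ≠ 0 := by omega
      have hlL1 : l ≠ Φ.L - 1 := by omega
      have hlL : l ≠ Φ.L := by omega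
      show ϱ ((parallel Φ N t w).affine l
            (hidden ϱ (parallel Φ N t w) (toInput (fun _ : Fin 1 => s)) l) k)
          = ϱ (Φ.affine l
            (hidden ϱ Φ (toInput (fun _ : Fin 1 => s * t (k / Φ.dims (l+1)))) l)
            (k % Φ.dims (l+1)))
      congr 1
      have hdims : (parallel Φ N t w).dims l = N * Φ.dims l := by
        simp [parallel, hl0, hlL]
      have hA : ∀ p j, (parallel Φ N t w).A l p j =
          if p / Φ.dims (l + 1) = j / Φ.dims l then
            Φ.A l (p % Φ.dims (l + 1)) (j % Φ.dims l) else 0 := by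
        intro p j; simp [parallel, hl0, hlL1]
      have hb : (parallel Φ N t w).b l k = Φ.b l (k % Φ.dims (l+1)) := by
        simp [parallel, hlL1]
      simp only [affine, hdims, hb]
      rw [sum_range_mul']
      congr 1
      rw [Finset.sum_eq_single (k / Φ.dims (l+1))]
      · apply Finset.sum_congr rfl
        intro r hr
        have hrd : r < Φ.dims l := Finset.mem_range.mp hr
        have hdl : 0 < Φ.dims l := lt_of_le_of_lt (Nat.zero_le r) hrd
        have hdiv : (Φ.dims l * (k / Φ.dims (l+1)) + r) / Φ.dims l = k / Φ.dims (l+1) := by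
          rw [Nat.mul_add_div hdl, Nat.div_eq_of_lt hrd, Nat.add_zero]
        have hmod : (Φ.dims l * (k / Φ.dims (l+1)) + r) % Φ.dims l = r := by
          rw [Nat.mul_add_mod, Nat.mod_eq_of_lt hrd]
        have hlt : Φ.dims l * (k / Φ.dims (l+1)) + r < N * Φ.dims l := by
          calc Φ.dims l * (k / Φ.dims (l+1)) + r < Φ.dims l * (k / Φ.dims (l+1) + 1) := by rw [Nat.mul_succ]; omega
            _ ≤ Φ.dims l * N := Nat.mul_le_mul_left _ (by omega)
            _ = N * Φ.dims l := Nat.mul_comm _ _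
        rw [hA, hdiv, if_pos rfl, ih (by omega) _ hlt, hdiv, hmod]
      · intro i hi hne
        apply Finset.sum_eq_zero
        intro r hr
        have hrd : r < Φ.dims l := Finset.mem_range.mp hr
        have hdl : 0 < Φ.dims l := lt_of_le_of_lt (Nat.zero_le r) hrd
        have hdiv : (Φ.dims l * i + r) / Φ.dims l = i := by
          rw [Nat.mul_add_div hdl, Nat.div_eq_of_lt hrd, Nat.add_zero]
        rw [hA, hdiv, if_neg (fun h => hne h.symm), zero_mul]
      · intro h
        exact absurd (Finset.mem_range.mpr hi0) h

lemma parallel_realize1 (Φ : NeuralNetwork) (hL : 2 ≤ Φ.L) (h0 : Φ.dims 0 = 1)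
    (N : ℕ) (t w : ℕ → ℝ) (ϱ : ℝ → ℝ) (s : ℝ) :
    realize1 ϱ (parallel Φ N t w) s
      = ∑ i ∈ Finset.range N, w i * realize1 ϱ Φ (s * t i) := by
  have hL0 : (parallel Φ N t w).L = Φ.L := rfl
  have hl1 : Φ.L - 1 ≠ 0 := by omega
  have hl2 : Φ.L - 1 ≠ Φ.L := by omega
  have hdims : (parallel Φ N t w).dims (Φ.L - 1) = N * Φ.dims (Φ.L - 1) := by
    simp [parallel, hl1, hl2]
  have hb : (parallel Φ N t w).b (Φ.L - 1) 0
      = (∑ i ∈ Finset.range N, w i) * Φ.b (Φ.L - 1) 0 := by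
    simp [parallel]
  have hA : ∀ j, (parallel Φ N t w).A (Φ.L - 1) 0 j
      = w (j / Φ.dims (Φ.L - 1)) * Φ.A (Φ.L - 1) 0 (j % Φ.dims (Φ.L - 1)) := by
    intro j; simp [parallel, hl1]
  simp only [realize1, realize, hL0, affine, hdims, hb]
  rw [sum_range_mul']
  have key : ∀ i ∈ Finset.range N, ∀ r ∈ Finset.range (Φ.dims (Φ.L - 1)),
      (parallel Φ N t w).A (Φ.L - 1) 0 (Φ.dims (Φ.L - 1) * i + r)
        * hidden ϱ (parallel Φ N t w) (toInput (fun _ : Fin 1 => s)) (Φ.L - 1)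
            (Φ.dims (Φ.L - 1) * i + r)
      = w i * (Φ.A (Φ.L - 1) 0 r
          * hidden ϱ Φ (toInput (fun _ : Fin 1 => s * t i)) (Φ.L - 1) r) := by
    intro i hi r hr
    have hiN : i < N := Finset.mem_range.mp hi
    have hrd : r < Φ.dims (Φ.L - 1) := Finset.mem_range.mp hr
    have hdl : 0 < Φ.dims (Φ.L - 1) := lt_of_le_of_lt (Nat.zero_le r) hrd
    have hdiv : (Φ.dims (Φ.L - 1) * i + r) / Φ.dims (Φ.L - 1) = i := by
      rw [Nat.mul_add_div hdl, Nat.div_eq_of_lt hrd, Nat.add_zero]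
    have hmod : (Φ.dims (Φ.L - 1) * i + r) % Φ.dims (Φ.L - 1) = r := by
      rw [Nat.mul_add_mod, Nat.mod_eq_of_lt hrd]
    have hlt : Φ.dims (Φ.L - 1) * i + r < N * Φ.dims (Φ.L - 1) := by
      calc Φ.dims (Φ.L - 1) * i + r < Φ.dims (Φ.L - 1) * (i + 1) := by rw [Nat.mul_succ]; omega
        _ ≤ Φ.dims (Φ.L - 1) * N := Nat.mul_le_mul_left _ (by omega)
        _ = N * Φ.dims (Φ.L - 1) := Nat.mul_comm _ _
    rw [hA, hdiv, hmod,
      parallel_hidden Φ hL h0 N t w ϱ s (Φ.L - 1) (by omega) le_rfl _ hlt, hdiv, hmod]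
    ring
  rw [Finset.sum_congr rfl (fun i hi => Finset.sum_congr rfl (fun r hr => key i hi r hr))]
  simp only [realize1, realize, affine, ← Finset.mul_sum]
  simp only [mul_add, Finset.sum_add_distrib, Finset.sum_mul]
lemma parallel_Mlayer_le (Φ : NeuralNetwork) (hL : 2 ≤ Φ.L) (h0 : Φ.dims 0 = 1)
    (hout : Φ.dims Φ.L = 1) (N : ℕ) (t w : ℕ → ℝ) (l : ℕ) (hl : l < Φ.L) :
    (parallel Φ N t w).Mlayer l ≤ N * Φ.Mlayer l := by
  classical
  set Ψ := parallel Φ N t w with hΨ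
  rw [Mlayer, Mlayer, Nat.mul_add]
  rcases eq_or_ne l 0 with rfl | hl0
  · -- first layer
    have hd1 : Ψ.dims 1 = N * Φ.dims 1 := by
      simp [hΨ, parallel, show (1:ℕ) ≠ Φ.L by omega]
    have hd0 : Ψ.dims 0 = 1 := by simp [hΨ, parallel]
    have hA : ∀ p j, Ψ.A 0 p j = t (p / Φ.dims 1) * Φ.A 0 (p % Φ.dims 1) j := by
      intro p j; simp [hΨ, parallel]
    have hb : ∀ p, Ψ.b 0 p = Φ.b 0 (p % Φ.dims 1) := by
      intro p; simp [hΨ, parallel, show (0:ℕ) ≠ Φ.L - 1 by omega]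
    apply Nat.add_le_add
    · apply card_le_mul_of_inj _ _ N
        (fun pj => (pj.1 / Φ.dims 1, (pj.1 % Φ.dims 1, pj.2)))
      · rintro ⟨p, j⟩ hmem
        simp only [Finset.mem_filter, Finset.mem_product, Finset.mem_range] at hmem
        obtain ⟨⟨hp, hj⟩, hne⟩ := hmem
        rw [hd1] at hp
        rw [hd0] at hj
        have hdpos : 0 < Φ.dims 1 := Nat.pos_of_ne_zero
          (fun h => by simp [h] at hp)
        simp only [Finset.mem_product, Finset.mem_filter, Finset.mem_range, h0]
        refine ⟨Nat.div_lt_of_lt_mul (by rwa [Nat.mul_comm] at hp),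
          ⟨⟨Nat.mod_lt _ hdpos, hj⟩, ?_⟩⟩
        intro hz
        exact hne (by rw [hA, hz, mul_zero])
      · rintro ⟨p, j⟩ h1 ⟨p', j'⟩ h2 heq
        simp only [Prod.mk.injEq] at heq
        obtain ⟨e1, e2, e3⟩ := heq
        have : p = p' := by
          rw [← Nat.div_add_mod p (Φ.dims 1), ← Nat.div_add_mod p' (Φ.dims 1), e1, e2]
        simp [this, e3]
    · apply card_le_mul_of_inj _ _ N (fun p => (p / Φ.dims 1, p % Φ.dims 1))
      · intro p hmem
        simp only [Finset.mem_filter, Finset.mem_range] at hmem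
        obtain ⟨hp, hne⟩ := hmem
        rw [hd1] at hp
        have hdpos : 0 < Φ.dims 1 := Nat.pos_of_ne_zero (fun h => by simp [h] at hp)
        simp only [Finset.mem_product, Finset.mem_filter, Finset.mem_range]
        exact ⟨Nat.div_lt_of_lt_mul (by rwa [Nat.mul_comm] at hp),
          Nat.mod_lt _ hdpos, by rwa [hb] at hne⟩
      · intro p h1 p' h2 heq
        simp only [Prod.mk.injEq] at heq
        rw [← Nat.div_add_mod p (Φ.dims 1), ← Nat.div_add_mod p' (Φ.dims 1), heq.1, heq.2]
  rcases eq_or_ne l (Φ.L - 1) with rfl | hlL1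
  · -- last layer
    have hdtop : Ψ.dims (Φ.L - 1 + 1) = 1 := by
      simp [hΨ, parallel, show Φ.L - 1 + 1 = Φ.L by omega]
    have hdl : Ψ.dims (Φ.L - 1) = N * Φ.dims (Φ.L - 1) := by
      simp [hΨ, parallel, hl0, show Φ.L - 1 ≠ Φ.L by omega]
    have hA : ∀ p j, Ψ.A (Φ.L - 1) p j
        = w (j / Φ.dims (Φ.L - 1)) * Φ.A (Φ.L - 1) 0 (j % Φ.dims (Φ.L - 1)) := by
      intro p j; simp [hΨ, parallel, hl0]
    have hb : ∀ p, Ψ.b (Φ.L - 1) p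
        = (∑ i ∈ Finset.range N, w i) * Φ.b (Φ.L - 1) 0 := by
      intro p; simp [hΨ, parallel]
    have houtl : Φ.dims (Φ.L - 1 + 1) = 1 := by
      rw [show Φ.L - 1 + 1 = Φ.L by omega, hout]
    apply Nat.add_le_add
    · apply card_le_mul_of_inj _ _ N
        (fun pj => (pj.2 / Φ.dims (Φ.L - 1), (pj.1, pj.2 % Φ.dims (Φ.L - 1))))
      · rintro ⟨p, j⟩ hmem
        simp only [Finset.mem_filter, Finset.mem_product, Finset.mem_range] at hmem
        obtain ⟨⟨hp, hj⟩, hne⟩ := hmem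
        rw [hdtop] at hp
        rw [hdl] at hj
        have hdpos : 0 < Φ.dims (Φ.L - 1) := Nat.pos_of_ne_zero
          (fun h => by simp [h] at hj)
        have hp0 : p = 0 := by omega
        simp only [Finset.mem_product, Finset.mem_filter, Finset.mem_range, houtl]
        refine ⟨Nat.div_lt_of_lt_mul (by rwa [Nat.mul_comm] at hj),
          ⟨⟨by omega, Nat.mod_lt _ hdpos⟩, ?_⟩⟩
        subst hp0
        intro hz
        exact hne (by rw [hA, hz, mul_zero])
      · rintro ⟨p, j⟩ h1 ⟨p', j'⟩ h2 heq
        simp only [Prod.mk.injEq] at heq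
        obtain ⟨e1, e2, e3⟩ := heq
        have : j = j' := by
          rw [← Nat.div_add_mod j (Φ.dims (Φ.L - 1)),
            ← Nat.div_add_mod j' (Φ.dims (Φ.L - 1)), e1, e3]
        simp [this, e2]
    · apply card_le_mul_of_inj _ _ N (fun p => (0, p))
      · intro p hmem
        simp only [Finset.mem_filter, Finset.mem_range] at hmem
        obtain ⟨hp, hne⟩ := hmem
        rw [hb] at hne
        have hbne : Φ.b (Φ.L - 1) 0 ≠ 0 := fun h => hne (by rw [h, mul_zero])
        have hNpos : 0 < N := by
          rcases Nat.eq_zero_or_pos N with h | h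
          · exfalso; apply hne; simp [h]
          · exact h
        rw [hdtop] at hp
        simp only [Finset.mem_product, Finset.mem_filter, Finset.mem_range, houtl]
        refine ⟨hNpos, by omega, ?_⟩
        have hp0 : p = 0 := by omega
        rw [hp0]
        exact hbne
      · intro p h1 p' h2 heq
        exact congrArg Prod.snd heq
  · -- middle layer
    have h1l : 1 ≤ l := by omega
    have hd1 : Ψ.dims (l + 1) = N * Φ.dims (l + 1) := by
      simp [hΨ, parallel, show l + 1 ≠ 0 by omega, show l + 1 ≠ Φ.L by omega]
    have hdl : Ψ.dims l = N * Φ.dims l := by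
      simp [hΨ, parallel, hl0, show l ≠ Φ.L by omega]
    have hA : ∀ p j, Ψ.A l p j
        = if p / Φ.dims (l + 1) = j / Φ.dims l then
            Φ.A l (p % Φ.dims (l + 1)) (j % Φ.dims l) else 0 := by
      intro p j; simp [hΨ, parallel, hl0, hlL1]
    have hb : ∀ p, Ψ.b l p = Φ.b l (p % Φ.dims (l + 1)) := by
      intro p; simp [hΨ, parallel, hlL1]
    apply Nat.add_le_add
    · apply card_le_mul_of_inj _ _ N
        (fun pj => (pj.1 / Φ.dims (l + 1), (pj.1 % Φ.dims (l + 1), pj.2 % Φ.dims l)))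
      · rintro ⟨p, j⟩ hmem
        simp only [Finset.mem_filter, Finset.mem_product, Finset.mem_range] at hmem
        obtain ⟨⟨hp, hj⟩, hne⟩ := hmem
        rw [hd1] at hp
        rw [hdl] at hj
        have hdpos : 0 < Φ.dims (l + 1) := Nat.pos_of_ne_zero
          (fun h => by simp [h] at hp)
        have hdlpos : 0 < Φ.dims l := Nat.pos_of_ne_zero (fun h => by simp [h] at hj)
        rw [hA] at hne
        by_cases hblock : p / Φ.dims (l + 1) = j / Φ.dims l
        · simp only [Finset.mem_product, Finset.mem_filter, Finset.mem_range]
          refine ⟨Nat.div_lt_of_lt_mul (by rwa [Nat.mul_comm] at hp),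
            ⟨⟨Nat.mod_lt _ hdpos, Nat.mod_lt _ hdlpos⟩, ?_⟩⟩
          intro hz
          exact hne (by rw [if_pos hblock, hz])
        · exact absurd (if_neg hblock) hne
      · rintro ⟨p, j⟩ h1 ⟨p', j'⟩ h2 heq
        simp only [Finset.mem_filter, Finset.mem_product, Finset.mem_range] at h1 h2
        have hb1 : p / Φ.dims (l + 1) = j / Φ.dims l := by
          by_contra hcon
          exact h1.2 (by rw [hA, if_neg hcon])
        have hb2 : p' / Φ.dims (l + 1) = j' / Φ.dims l := by
          by_contra hcon
          exact h2.2 (by rw [hA, if_neg hcon])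
        simp only [Prod.mk.injEq] at heq
        obtain ⟨e1, e2, e3⟩ := heq
        have hpp : p = p' := by
          rw [← Nat.div_add_mod p (Φ.dims (l + 1)), ← Nat.div_add_mod p' (Φ.dims (l + 1)),
            e1, e2]
        have hjj : j = j' := by
          rw [← Nat.div_add_mod j (Φ.dims l), ← Nat.div_add_mod j' (Φ.dims l),
            ← hb1, ← hb2, e1, e3]
        simp [hpp, hjj]
    · apply card_le_mul_of_inj _ _ N (fun p => (p / Φ.dims (l + 1), p % Φ.dims (l + 1)))
      · intro p hmem
        simp only [Finset.mem_filter, Finset.mem_range] at hmem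
        obtain ⟨hp, hne⟩ := hmem
        rw [hd1] at hp
        have hdpos : 0 < Φ.dims (l + 1) := Nat.pos_of_ne_zero
          (fun h => by simp [h] at hp)
        simp only [Finset.mem_product, Finset.mem_filter, Finset.mem_range]
        exact ⟨Nat.div_lt_of_lt_mul (by rwa [Nat.mul_comm] at hp),
          Nat.mod_lt _ hdpos, by rwa [hb] at hne⟩
      · intro p h1 p' h2 heq
        simp only [Prod.mk.injEq] at heq
        rw [← Nat.div_add_mod p (Φ.dims (l + 1)), ← Nat.div_add_mod p' (Φ.dims (l + 1)),
          heq.1, heq.2]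

lemma parallel_size_le (Φ : NeuralNetwork) (hL : 2 ≤ Φ.L) (h0 : Φ.dims 0 = 1)
    (hout : Φ.dims Φ.L = 1) (N : ℕ) (t w : ℕ → ℝ) :
    (parallel Φ N t w).size ≤ N * Φ.size := by
  rw [size, size, Finset.mul_sum]
  have hLp : (parallel Φ N t w).L = Φ.L := rfl
  rw [hLp]
  exact Finset.sum_le_sum fun l hl =>
    parallel_Mlayer_le Φ hL h0 hout N t w l (Finset.mem_range.mp hl)

/-- A 1-layer network realizing the affine map `s ↦ α s + β`. -/
def affNet (α β : ℝ) : NeuralNetwork :=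
  ⟨1, fun _ => 1, fun _ _ _ => α, fun _ _ => β⟩

lemma affNet_realize1 (ϱ : ℝ → ℝ) (α β s : ℝ) :
    realize1 ϱ (affNet α β) s = α * s + β := by
  simp [realize1, NeuralNetwork.realize, affNet, NeuralNetwork.affine,
    NeuralNetwork.hidden, toInput]

lemma affNet_size (α β : ℝ) : (affNet α β).size ≤ 2 := by
  classical
  rw [size]
  have : (affNet α β).L = 1 := rfl
  rw [this, Finset.sum_range_one, Mlayer]
  have h1 : ((Finset.range ((affNet α β).dims (0 + 1)) ×ˢ
      Finset.range ((affNet α β).dims 0)).filter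
      (fun p => (affNet α β).A 0 p.1 p.2 ≠ 0)).card ≤ 1 := by
    apply le_trans (Finset.card_filter_le _ _)
    simp [affNet]
  have h2 : ((Finset.range ((affNet α β).dims (0 + 1))).filter
      (fun i => (affNet α β).b 0 i ≠ 0)).card ≤ 1 := by
    apply le_trans (Finset.card_filter_le _ _)
    simp [affNet]
  omega

lemma realize1_of_L_le_one (Φ : NeuralNetwork) (hL : Φ.L ≤ 1) (h0 : Φ.dims 0 = 1)
    (ϱ : ℝ → ℝ) (s : ℝ) :
    realize1 ϱ Φ s = Φ.A 0 0 0 * s + Φ.b 0 0 := by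
  have hL1 : Φ.L - 1 = 0 := by omega
  simp [realize1, NeuralNetwork.realize, hL1, NeuralNetwork.hidden,
    NeuralNetwork.affine, h0, toInput]
end NNAux

set_option maxHeartbeats 2000000 in
open NeuralNetwork in
/-- Proposition 4.1: DNN expression rates for option prices in univariate exponential
Lévy models, probabilistic argument with a Lipschitz bound on the approximating networks. -/
theorem statement1
    {Ω : Type*} [MeasurableSpace Ω] (μ : Measure Ω) [IsProbabilityMeasure μ]
    (ϱ : ℝ → ℝ) (T : ℝ) (hT : 0 < T) (a b : ℝ) (ha : 0 < a) (hab : a < b)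
    (X : Ω → ℝ) (hX : Measurable X)
    (hmom : Integrable (fun ω => Real.exp (2 * X ω)) μ)
    (φ : ℝ → ℝ) (c q : ℝ) (hc : 0 < c) (hq : 0 ≤ q)
    (net : ℝ → NeuralNetwork)
    (hio : ∀ ε ∈ Set.Ioc (0 : ℝ) 1,
      (net ε).dims 0 = 1 ∧ (net ε).dims (net ε).L = 1)
    (hclose : ∀ ε ∈ Set.Ioc (0 : ℝ) 1, ∀ s : ℝ, 0 < s →
      |φ s - realize1 ϱ (net ε) s| ≤ ε * c * (1 + |s|))
    (hsize : ∀ ε ∈ Set.Ioc (0 : ℝ) 1, ((net ε).size : ℝ) ≤ c * ε ^ (-q))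
    (hlip : ∀ ε ∈ Set.Ioc (0 : ℝ) 1, ∀ s t : ℝ,
      |realize1 ϱ (net ε) s - realize1 ϱ (net ε) t| ≤ c * |s - t|) :
    ∃ κ : ℝ, c ≤ κ ∧ ∀ ε ∈ Set.Ioc (0 : ℝ) 1,
      ∃ ψ : NeuralNetwork, ψ.dims 0 = 1 ∧ ψ.dims ψ.L = 1 ∧
        ((ψ.size : ℝ) ≤ κ * ε ^ (-(2 + q))) ∧
        ∀ s ∈ Set.Icc a b,
          |(∫ ω, φ (s * Real.exp (X ω)) ∂μ) - realize1 ϱ ψ s| ≤ ε := by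
  classical
  set Y : Ω → ℝ := fun ω => Real.exp (X ω) with hYdef
  have hYm : Measurable Y := Real.measurable_exp.comp hX
  have hYpos : ∀ ω, 0 < Y ω := fun ω => Real.exp_pos _
  have hYsq : Integrable (fun ω => Y ω * Y ω) μ := by
    have h : (fun ω => Y ω * Y ω) = fun ω => Real.exp (2 * X ω) := by
      funext ω; rw [two_mul, Real.exp_add]
    rw [h]; exact hmom
  have hY1 : Integrable Y μ := by
    refine Integrable.mono' (hYsq.add (integrable_const 1)) hYm.aestronglyMeasurable ?_
    filter_upwards with ω
    simp only [Pi.add_apply, Real.norm_eq_abs]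
    rw [abs_of_pos (hYpos ω)]
    nlinarith [hYpos ω]
  set EY : ℝ := ∫ ω, Y ω ∂μ with hEY
  set EY2 : ℝ := ∫ ω, Y ω * Y ω ∂μ with hEY2
  have hEYnn : 0 ≤ EY := integral_nonneg fun ω => (hYpos ω).le
  have hEY2nn : 0 ≤ EY2 := integral_nonneg fun ω => mul_nonneg (hYpos ω).le (hYpos ω).le
  set Cm : ℝ := 1 + EY2 with hCm
  have hCm1 : 1 ≤ Cm := by rw [hCm]; linarith
  have hEYle : EY ≤ Cm := by
    rw [hCm]
    have h : ∫ ω, Y ω ∂μ ≤ ∫ ω, (1 + Y ω * Y ω) ∂μ := by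
      apply integral_mono hY1 ((integrable_const 1).add hYsq)
      intro ω; simp only [Pi.add_apply]; nlinarith [hYpos ω]
    rwa [integral_add (integrable_const 1) hYsq, integral_const, probReal_univ,
      smul_eq_mul, mul_one] at h
  have hb : 0 < b := lt_trans ha hab
  set B : ℝ := max 1 (c * (1 + b) * Cm) with hB
  have hB1 : 1 ≤ B := le_max_left _ _
  have hBc : c * (1 + b) * Cm ≤ B := le_max_right _ _
  have hB0 : 0 < B := lt_of_lt_of_le one_pos hB1
  have h3B : (0:ℝ) < 3 * B := by linarith
  have hrq : (0:ℝ) < (3 * B) ^ q := Real.rpow_pos_of_pos h3B q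
  set κ : ℝ := c + 2 + 11 * (3 * B) ^ q * B ^ 2 * Cm * c with hκ
  have hcoefpos : 0 < 11 * (3 * B) ^ q * B ^ 2 * Cm * c :=
    mul_pos (mul_pos (mul_pos (mul_pos (by norm_num) hrq) (by positivity)) (by linarith)) hc
  have hκc : c ≤ κ := by simp only [hκ]; linarith
  refine ⟨κ, hκc, ?_⟩
  intro ε hε
  obtain ⟨hε0, hε1⟩ := hε
  -- parameters
  set ε' : ℝ := ε / (3 * B) with hε'def
  have hε'0 : 0 < ε' := div_pos hε0 h3B
  have hε'1 : ε' ≤ 1 := by rw [hε'def, div_le_one h3B]; linarith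
  have hε'mem : ε' ∈ Set.Ioc (0:ℝ) 1 := ⟨hε'0, hε'1⟩
  set Φ : NeuralNetwork := net ε' with hΦ
  obtain ⟨hin, hout⟩ := hio ε' hε'mem
  set R : ℝ → ℝ := realize1 ϱ Φ with hR
  have hRlip : ∀ x y : ℝ, |R x - R y| ≤ c * |x - y| := hlip ε' hε'mem
  have hRcont : Continuous R := by
    have hlw : LipschitzWith (Real.toNNReal c) R := by
      apply LipschitzWith.of_dist_le_mul
      intro x y
      rw [Real.dist_eq, Real.dist_eq, Real.coe_toNNReal c hc.le]
      exact hRlip x y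
    exact hlw.continuous
  have hφR : ∀ x : ℝ, 0 < x → |φ x - R x| ≤ ε' * c * (1 + |x|) := hclose ε' hε'mem
  have hR0 : ∀ x : ℝ, |R x| ≤ |R 0| + c * |x| := by
    intro x
    have h1 := hRlip x 0
    have h2 := abs_add_le (R x - R 0) (R 0)
    simp only [sub_zero] at h1
    simp only [sub_add_cancel] at h2
    linarith
  set δ : ℝ := ε / (3 * B) with hδdef
  have hδ0 : 0 < δ := hε'0
  set N : ℕ := ⌈9 * B ^ 2 * Cm / ε ^ 2⌉₊ + 1 with hN
  have hN1 : 1 ≤ N := Nat.le_add_left 1 _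
  have hNlb : 9 * B ^ 2 * Cm / ε ^ 2 ≤ (N : ℝ) - 1 := by
    have h : ((⌈9 * B ^ 2 * Cm / ε ^ 2⌉₊ : ℕ) : ℝ) = (N : ℝ) - 1 := by
      rw [hN]; push_cast; ring
    rw [← h]; exact Nat.le_ceil _
  set K : ℝ := ((N : ℝ) - 1) * δ with hK
  have hKlb : 3 * B * Cm / ε ≤ K := by
    have h1 : 3 * B * Cm / ε = (9 * B ^ 2 * Cm / ε ^ 2) * δ := by
      rw [hδdef]; field_simp; ring
    rw [h1, hK]
    exact mul_le_mul_of_nonneg_right hNlb hδ0.le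
  have hK0 : 0 < K := lt_of_lt_of_le (by positivity) hKlb
  -- quantization
  set I : Ω → ℕ := fun ω => min ⌊Y ω / δ⌋₊ (N - 1) with hI
  have hIm : Measurable I := (hYm.div_const δ).nat_floor.min measurable_const
  set YD : Ω → ℝ := fun ω => δ * (I ω : ℝ) with hYD
  have hYDm : Measurable YD := measurable_const.mul (measurable_from_top.comp hIm)
  have hIlt : ∀ ω, I ω < N := fun ω => lt_of_le_of_lt (min_le_right _ _) (by omega)
  have hYDK : ∀ ω, 0 ≤ YD ω ∧ YD ω ≤ K := by
    intro ω
    constructor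
    · positivity
    · have h1 : (I ω : ℝ) ≤ (N : ℝ) - 1 := by
        have hmr := min_le_right ⌊Y ω / δ⌋₊ (N - 1)
        have h2 : ((I ω : ℕ) : ℝ) ≤ ((N - 1 : ℕ) : ℝ) := by exact_mod_cast hmr
        rwa [Nat.cast_sub hN1, Nat.cast_one] at h2
      calc YD ω = δ * (I ω : ℝ) := rfl
        _ ≤ δ * ((N : ℝ) - 1) := mul_le_mul_of_nonneg_left h1 hδ0.le
        _ = K := by rw [hK]; ring
  have hquant : ∀ ω, |Y ω - YD ω| ≤ δ + (if K ≤ Y ω then Y ω else 0) := by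
    intro ω
    have htail_nn : 0 ≤ (if K ≤ Y ω then Y ω else 0) := by
      split_ifs with h
      · exact (hYpos ω).le
      · exact le_refl 0
    by_cases hcase : ⌊Y ω / δ⌋₊ ≤ N - 1
    · have hImin : I ω = ⌊Y ω / δ⌋₊ := min_eq_left hcase
      have hfl : δ * (⌊Y ω / δ⌋₊ : ℝ) ≤ Y ω := by
        have h := Nat.floor_le (div_nonneg (hYpos ω).le hδ0.le)
        calc δ * (⌊Y ω / δ⌋₊ : ℝ) ≤ δ * (Y ω / δ) := by
              exact mul_le_mul_of_nonneg_left h hδ0.le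
          _ = Y ω := by field_simp
      have hfu : Y ω < δ * (⌊Y ω / δ⌋₊ : ℝ) + δ := by
        have h := Nat.lt_floor_add_one (Y ω / δ)
        have h2 : Y ω / δ < (⌊Y ω / δ⌋₊ : ℝ) + 1 := h
        calc Y ω = δ * (Y ω / δ) := by field_simp
          _ < δ * ((⌊Y ω / δ⌋₊ : ℝ) + 1) := by
              exact mul_lt_mul_of_pos_left h2 hδ0
          _ = δ * (⌊Y ω / δ⌋₊ : ℝ) + δ := by ring
      have hy : |Y ω - YD ω| ≤ δ := by
        have hYDe : YD ω = δ * (⌊Y ω / δ⌋₊ : ℝ) := by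
          simp only [hYD]; rw [hImin]
        rw [hYDe, abs_le]
        constructor <;> [linarith; linarith]
      linarith
    · have hImin : I ω = N - 1 := min_eq_right (le_of_not_ge hcase)
      have hYDval : YD ω = K := by
        simp only [hYD]
        rw [hImin, hK, Nat.cast_sub hN1, Nat.cast_one]
        ring
      have hNY : ((N : ℝ)) ≤ Y ω / δ := by
        have h1 : N ≤ ⌊Y ω / δ⌋₊ := by omega
        exact_mod_cast (Nat.le_floor_iff (div_nonneg (hYpos ω).le hδ0.le)).mp h1
      have hKY : K ≤ Y ω := by
        rw [hK]
        calc ((N:ℝ) - 1) * δ ≤ (N:ℝ) * δ :=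
              mul_le_mul_of_nonneg_right (by linarith) hδ0.le
          _ ≤ (Y ω / δ) * δ := mul_le_mul_of_nonneg_right hNY hδ0.le
          _ = Y ω := by field_simp
      rw [hYDval, if_pos hKY, abs_of_nonneg (by linarith)]
      linarith
  -- tail integrability
  set tail : Ω → ℝ := fun ω => if K ≤ Y ω then Y ω else 0 with htaildef
  have htailm : Measurable tail :=
    Measurable.ite (measurableSet_le measurable_const hYm) hYm measurable_const
  have htailint : Integrable tail μ := by
    apply hY1.mono' htailm.aestronglyMeasurable
    filter_upwards with ω
    rw [Real.norm_eq_abs]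
    simp only [htaildef]
    split_ifs with h
    · rw [abs_of_pos (hYpos ω)]
    · simp [(hYpos ω).le]
  have htail_int_le : ∫ ω, tail ω ∂μ ≤ Cm / K := by
    have h1 : ∫ ω, tail ω ∂μ ≤ ∫ ω, Y ω * Y ω / K ∂μ := by
      apply integral_mono htailint (hYsq.div_const K)
      intro ω
      simp only [htaildef]
      split_ifs with h
      · rw [le_div_iff₀ hK0]; nlinarith [hYpos ω]
      · positivity
    have h2 : ∫ ω, Y ω * Y ω / K ∂μ = EY2 / K := integral_div K _
    rw [h2] at h1
    apply le_trans h1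
    have hE : EY2 ≤ Cm := by rw [hCm]; linarith
    gcongr
  -- grid and weights
  set tt : ℕ → ℝ := fun i => δ * (i : ℝ) with htt
  set ww : ℕ → ℝ := fun i => (μ {ω | I ω = i}).toReal with hww
  have hAim : ∀ i : ℕ, MeasurableSet {ω | I ω = i} :=
    fun i => hIm (measurableSet_singleton i)
  have hsum_eq : ∀ s : ℝ, ∫ ω, R (s * YD ω) ∂μ
      = ∑ i ∈ Finset.range N, ww i * R (s * tt i) := by
    intro s
    have hrep : (fun ω => R (s * YD ω))
        = fun ω => ∑ i ∈ Finset.range N,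
            Set.indicator {ω' | I ω' = i} (fun _ => R (s * tt i)) ω := by
      funext ω
      rw [Finset.sum_eq_single (I ω)]
      · have hm : ω ∈ {ω' | I ω' = I ω} := rfl
        rw [Set.indicator_of_mem hm]
      · intro i _ hne
        apply Set.indicator_of_notMem
        intro h
        exact hne (Eq.symm h)
      · intro h; exact absurd (Finset.mem_range.mpr (hIlt ω)) h
    rw [hrep, integral_finset_sum]
    · refine Finset.sum_congr rfl fun i _ => ?_
      rw [integral_indicator_const _ (hAim i), smul_eq_mul]; rfl
    · exact fun i _ => (integrable_const _).indicator (hAim i)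
  -- the network
  obtain ⟨ψ, hψ0, hψL, hψsize, hψreal⟩ :
      ∃ ψ : NeuralNetwork, ψ.dims 0 = 1 ∧ ψ.dims ψ.L = 1 ∧
        ((ψ.size : ℝ) ≤ κ * ε ^ (-(2 + q))) ∧
        ∀ s : ℝ, realize1 ϱ ψ s = ∑ i ∈ Finset.range N, ww i * R (s * tt i) := by
    have hκpos : 0 < κ := lt_of_lt_of_le hc hκc
    have hrpow1 : 1 ≤ ε ^ (-(2 + q)) :=
      Real.one_le_rpow_of_pos_of_le_one_of_nonpos hε0 hε1 (by linarith)
    by_cases hL2 : 2 ≤ Φ.L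
    · refine ⟨parallel Φ N tt ww, by simp [parallel], ?_, ?_, ?_⟩
      · show (parallel Φ N tt ww).dims Φ.L = 1
        simp [parallel]
      · -- size bound
        have h1 : ((parallel Φ N tt ww).size : ℝ) ≤ (N : ℝ) * (Φ.size : ℝ) := by
          exact_mod_cast parallel_size_le Φ hL2 hin hout N tt ww
        have hNub : (N : ℝ) ≤ 11 * B ^ 2 * Cm / ε ^ 2 := by
          have hceil : ((⌈9 * B ^ 2 * Cm / ε ^ 2⌉₊ : ℕ) : ℝ) < 9 * B ^ 2 * Cm / ε ^ 2 + 1 :=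
            Nat.ceil_lt_add_one (by positivity)
          have hcast : (N : ℝ) = ((⌈9 * B ^ 2 * Cm / ε ^ 2⌉₊ : ℕ) : ℝ) + 1 := by
            rw [hN]; push_cast; ring
          have hquot : 1 ≤ B ^ 2 * Cm / ε ^ 2 := by
            rw [le_div_iff₀ (by positivity)]
            nlinarith [sq_nonneg ε, sq_nonneg B]
          have hX : 9 * B ^ 2 * Cm / ε ^ 2 = 9 * (B ^ 2 * Cm / ε ^ 2) := by ring
          have hX2 : 11 * B ^ 2 * Cm / ε ^ 2 = 11 * (B ^ 2 * Cm / ε ^ 2) := by ring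
          rw [hcast]
          linarith [hceil, hquot, hX, hX2]
        have hΦsize : ((Φ.size : ℕ) : ℝ) ≤ c * ε' ^ (-q) := hsize ε' hε'mem
        have hε'q : ε' ^ (-q) = (3 * B) ^ q * ε ^ (-q) := by
          rw [hε'def, Real.rpow_neg (by positivity) q, Real.div_rpow hε0.le h3B.le,
            Real.rpow_neg hε0.le q, inv_div, div_eq_mul_inv]
        have hεsplit : ε ^ (-(2 + q)) = 1 / ε ^ 2 * ε ^ (-q) := by
          rw [show -(2 + q) = (-(2:ℝ)) + (-q) by ring, Real.rpow_add hε0]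
          congr 1
          rw [Real.rpow_neg hε0.le, one_div]
          congr 1
          rw [show ((2:ℝ)) = ((2:ℕ):ℝ) by norm_num, Real.rpow_natCast]
        calc ((parallel Φ N tt ww).size : ℝ) ≤ (N : ℝ) * (Φ.size : ℝ) := h1
          _ ≤ (11 * B ^ 2 * Cm / ε ^ 2) * (c * ((3 * B) ^ q * ε ^ (-q))) := by
              apply mul_le_mul hNub ?_ (Nat.cast_nonneg _) (by positivity)
              rw [← hε'q]; exact hΦsize
          _ = (11 * (3 * B) ^ q * B ^ 2 * Cm * c) * (1 / ε ^ 2 * ε ^ (-q)) := by ring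
          _ = (11 * (3 * B) ^ q * B ^ 2 * Cm * c) * ε ^ (-(2 + q)) := by rw [← hεsplit]
          _ ≤ κ * ε ^ (-(2 + q)) := by
              apply mul_le_mul_of_nonneg_right ?_ (Real.rpow_nonneg hε0.le _)
              rw [hκ]; linarith
      · intro s
        rw [parallel_realize1 Φ hL2 hin N tt ww ϱ s]
    · -- degenerate affine case
      push_neg at hL2
      have hL1 : Φ.L ≤ 1 := by omega
      have hRaff : ∀ x : ℝ, R x = Φ.A 0 0 0 * x + Φ.b 0 0 := fun x =>
        realize1_of_L_le_one Φ hL1 hin ϱ x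
      refine ⟨affNet (Φ.A 0 0 0 * ∑ i ∈ Finset.range N, ww i * tt i)
          (Φ.b 0 0 * ∑ i ∈ Finset.range N, ww i), rfl, rfl, ?_, ?_⟩
      · calc ((affNet _ _).size : ℝ) ≤ 2 := by exact_mod_cast affNet_size _ _
          _ ≤ κ * 1 := by rw [mul_one, hκ]; linarith
          _ ≤ κ * ε ^ (-(2 + q)) := mul_le_mul_of_nonneg_left hrpow1 hκpos.le
      · intro s
        rw [affNet_realize1]
        have hterm : ∀ i ∈ Finset.range N,
            ww i * R (s * tt i) = Φ.A 0 0 0 * (ww i * tt i) * s + Φ.b 0 0 * ww i := by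
          intro i _; rw [hRaff]; ring
        rw [Finset.sum_congr rfl hterm, Finset.sum_add_distrib, ← Finset.mul_sum,
          ← Finset.sum_mul, ← Finset.mul_sum]
  refine ⟨ψ, hψ0, hψL, hψsize, ?_⟩
  intro s hs
  have hs0 : 0 < s := lt_of_lt_of_le ha hs.1
  have hsb : s ≤ b := hs.2
  rw [hψreal s]
  show |(∫ ω, φ (s * Y ω) ∂μ) - ∑ i ∈ Finset.range N, ww i * R (s * tt i)| ≤ ε
  -- integrability facts
  have hf2m : Measurable fun ω => R (s * Y ω) :=
    hRcont.measurable.comp (measurable_const.mul hYm)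
  have hf2int : Integrable (fun ω => R (s * Y ω)) μ := by
    apply Integrable.mono' ((integrable_const (|R 0|)).add ((hY1.const_mul b).const_mul c))
      hf2m.aestronglyMeasurable
    filter_upwards with ω
    simp only [Pi.add_apply, Real.norm_eq_abs]
    have h1 := hR0 (s * Y ω)
    have h2 : |s * Y ω| = s * Y ω := abs_of_pos (mul_pos hs0 (hYpos ω))
    have h3 : s * Y ω ≤ b * Y ω := mul_le_mul_of_nonneg_right hsb (hYpos ω).le
    rw [h2] at h1
    have h4 : c * (s * Y ω) ≤ c * (b * Y ω) := mul_le_mul_of_nonneg_left h3 hc.le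
    linarith
  have hf3m : Measurable fun ω => R (s * YD ω) :=
    hRcont.measurable.comp (measurable_const.mul hYDm)
  have hf3int : Integrable (fun ω => R (s * YD ω)) μ := by
    apply Integrable.mono' (integrable_const (|R 0| + c * (b * K)))
      hf3m.aestronglyMeasurable
    filter_upwards with ω
    rw [Real.norm_eq_abs]
    have h1 := hR0 (s * YD ω)
    obtain ⟨hYD0, hYDK'⟩ := hYDK ω
    have h2 : |s * YD ω| = s * YD ω := abs_of_nonneg (mul_nonneg hs0.le hYD0)
    rw [h2] at h1
    have h3 : s * YD ω ≤ b * K := by nlinarith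
    nlinarith [hc.le]
  have hf1m : Measurable fun ω => φ (s * Y ω) := by
    apply measurable_of_tendsto_metrizable
      (f := fun (n : ℕ) ω => realize1 ϱ (net (1 / ((n : ℝ) + 1))) (s * Y ω))
    · intro n
      have hmem : (1:ℝ) / ((n:ℝ) + 1) ∈ Set.Ioc (0:ℝ) 1 := by
        refine ⟨by positivity, ?_⟩
        rw [div_le_one (by positivity)]
        have hn : (0:ℝ) ≤ (n:ℝ) := Nat.cast_nonneg n
        linarith
      have hlw : LipschitzWith (Real.toNNReal c) (realize1 ϱ (net (1 / ((n:ℝ) + 1)))) := by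
        apply LipschitzWith.of_dist_le_mul
        intro x y
        rw [Real.dist_eq, Real.dist_eq, Real.coe_toNNReal c hc.le]
        exact hlip _ hmem x y
      exact hlw.continuous.measurable.comp (measurable_const.mul hYm)
    · rw [tendsto_pi_nhds]
      intro ω
      have hx : 0 < s * Y ω := mul_pos hs0 (hYpos ω)
      rw [tendsto_iff_dist_tendsto_zero]
      have hbnd : ∀ n : ℕ, dist (realize1 ϱ (net (1/((n:ℝ)+1))) (s * Y ω)) (φ (s * Y ω))
          ≤ (1/((n:ℝ)+1)) * (c * (1 + |s * Y ω|)) := by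
        intro n
        have hmem : (1:ℝ)/((n:ℝ)+1) ∈ Set.Ioc (0:ℝ) 1 := by
          refine ⟨by positivity, ?_⟩
          rw [div_le_one (by positivity)]
          have hn : (0:ℝ) ≤ (n:ℝ) := Nat.cast_nonneg n
          linarith
        have h := hclose _ hmem (s * Y ω) hx
        rw [Real.dist_eq, abs_sub_comm]
        calc |φ (s * Y ω) - realize1 ϱ (net (1/((n:ℝ)+1))) (s * Y ω)|
            ≤ 1/((n:ℝ)+1) * c * (1 + |s * Y ω|) := h
          _ = 1/((n:ℝ)+1) * (c * (1 + |s * Y ω|)) := by ring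
      apply squeeze_zero (fun n => dist_nonneg) hbnd
      have hlim : Filter.Tendsto (fun n : ℕ => 1/((n:ℝ)+1)) Filter.atTop (nhds 0) :=
        tendsto_one_div_add_atTop_nhds_zero_nat
      simpa using hlim.mul_const (c * (1 + |s * Y ω|))
  have hf1int : Integrable (fun ω => φ (s * Y ω)) μ := by
    apply Integrable.mono'
      ((integrable_const (|R 0| + c)).add ((hY1.const_mul b).const_mul (2 * c)))
      hf1m.aestronglyMeasurable
    filter_upwards with ω
    simp only [Pi.add_apply, Real.norm_eq_abs]
    have hx : 0 < s * Y ω := mul_pos hs0 (hYpos ω)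
    have h1 := hφR (s * Y ω) hx
    have h2 := hR0 (s * Y ω)
    have habs : |s * Y ω| = s * Y ω := abs_of_pos hx
    rw [habs] at h1 h2
    have hsY : s * Y ω ≤ b * Y ω := mul_le_mul_of_nonneg_right hsb (hYpos ω).le
    have hε'c : ε' * c ≤ c := by nlinarith
    have h5 : ε' * c * (1 + s * Y ω) ≤ c * (1 + b * Y ω) := by
      have h6 : (0:ℝ) ≤ 1 + s * Y ω := by positivity
      have h7 : ε' * c * (1 + s * Y ω) ≤ c * (1 + s * Y ω) :=
        mul_le_mul_of_nonneg_right hε'c h6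
      have h8 : c * (1 + s * Y ω) ≤ c * (1 + b * Y ω) := by
        apply mul_le_mul_of_nonneg_left (by linarith) hc.le
      linarith
    have h9 : c * (s * Y ω) ≤ c * (b * Y ω) := mul_le_mul_of_nonneg_left hsY hc.le
    have h10 : |φ (s * Y ω)| ≤ |φ (s * Y ω) - R (s * Y ω)| + |R (s * Y ω)| := by
      have := abs_add_le (φ (s * Y ω) - R (s * Y ω)) (R (s * Y ω))
      simpa using this
    calc |φ (s * Y ω)| ≤ ε' * c * (1 + s * Y ω) + (|R 0| + c * (s * Y ω)) := by linarith
      _ ≤ c * (1 + b * Y ω) + (|R 0| + c * (b * Y ω)) := by linarith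
      _ = |R 0| + c + 2 * c * (b * Y ω) := by ring
  -- step 1
  have hstep1 : |(∫ ω, φ (s * Y ω) ∂μ) - ∫ ω, R (s * Y ω) ∂μ| ≤ ε / 3 := by
    rw [← integral_sub hf1int hf2int]
    have hdom : Integrable (fun ω => ε' * c * (1 + b * Y ω)) μ :=
      ((integrable_const 1).add (hY1.const_mul b)).const_mul (ε' * c)
    calc |∫ ω, (φ (s * Y ω) - R (s * Y ω)) ∂μ|
        ≤ ∫ ω, |φ (s * Y ω) - R (s * Y ω)| ∂μ := by
          simpa [Real.norm_eq_abs] using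
            norm_integral_le_integral_norm (μ := μ) (fun ω => φ (s * Y ω) - R (s * Y ω))
      _ ≤ ∫ ω, ε' * c * (1 + b * Y ω) ∂μ := by
          apply integral_mono (hf1int.sub hf2int).abs hdom
          intro ω
          have hx : 0 < s * Y ω := mul_pos hs0 (hYpos ω)
          have h1 := hφR (s * Y ω) hx
          have habs : |s * Y ω| = s * Y ω := abs_of_pos hx
          rw [habs] at h1
          have h2 : s * Y ω ≤ b * Y ω := mul_le_mul_of_nonneg_right hsb (hYpos ω).le
          have h3 : ε' * c * (1 + s * Y ω) ≤ ε' * c * (1 + b * Y ω) := by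
            apply mul_le_mul_of_nonneg_left (by linarith) (by positivity)
          exact le_trans h1 h3
      _ = ε' * c * (1 + b * EY) := by
          rw [integral_const_mul]
          congr 1
          rw [integral_add (integrable_const 1) (hY1.const_mul b), integral_const,
            probReal_univ, smul_eq_mul, mul_one, integral_const_mul]
      _ ≤ ε / 3 := by
          have h4 : c * (1 + b * EY) ≤ B := by
            apply le_trans ?_ hBc
            nlinarith [mul_nonneg (mul_nonneg hc.le hb.le) (sub_nonneg.mpr hEYle),
              mul_nonneg hc.le (sub_nonneg.mpr hCm1)]
          have h5 : ε' * c * (1 + b * EY) = ε' * (c * (1 + b * EY)) := by ring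
          rw [h5]
          calc ε' * (c * (1 + b * EY)) ≤ ε' * B := mul_le_mul_of_nonneg_left h4 hε'0.le
            _ = ε / 3 := by
                rw [hε'def, hδdef]
                field_simp
  -- step 2
  have hstep2 : |(∫ ω, R (s * Y ω) ∂μ) - ∫ ω, R (s * YD ω) ∂μ| ≤ ε / 3 + ε / 3 := by
    rw [← integral_sub hf2int hf3int]
    have hdom : Integrable (fun ω => c * b * (δ + tail ω)) μ :=
      ((integrable_const δ).add htailint).const_mul (c * b)
    have htail_nn : ∀ ω, 0 ≤ tail ω := by
      intro ω
      simp only [htaildef]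
      split_ifs with h
      · exact (hYpos ω).le
      · exact le_refl 0
    calc |∫ ω, (R (s * Y ω) - R (s * YD ω)) ∂μ|
        ≤ ∫ ω, |R (s * Y ω) - R (s * YD ω)| ∂μ := by
          simpa [Real.norm_eq_abs] using
            norm_integral_le_integral_norm (μ := μ) (fun ω => R (s * Y ω) - R (s * YD ω))
      _ ≤ ∫ ω, c * b * (δ + tail ω) ∂μ := by
          apply integral_mono (hf2int.sub hf3int).abs hdom
          intro ω
          have h1 := hRlip (s * Y ω) (s * YD ω)
          have h2 : |s * Y ω - s * YD ω| = s * |Y ω - YD ω| := by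
            rw [← mul_sub, abs_mul, abs_of_pos hs0]
          rw [h2] at h1
          have h3 : |Y ω - YD ω| ≤ δ + tail ω := hquant ω
          calc |R (s * Y ω) - R (s * YD ω)| ≤ c * (s * |Y ω - YD ω|) := h1
            _ ≤ c * (b * (δ + tail ω)) := by
                apply mul_le_mul_of_nonneg_left ?_ hc.le
                calc s * |Y ω - YD ω| ≤ b * |Y ω - YD ω| :=
                      mul_le_mul_of_nonneg_right hsb (abs_nonneg _)
                  _ ≤ b * (δ + tail ω) := mul_le_mul_of_nonneg_left h3 hb.le
            _ = c * b * (δ + tail ω) := by ring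
      _ = c * b * (δ + ∫ ω, tail ω ∂μ) := by
          rw [integral_const_mul]
          congr 1
          rw [integral_add (integrable_const δ) htailint, integral_const,
            probReal_univ, smul_eq_mul, one_mul]
      _ ≤ ε / 3 + ε / 3 := by
          have hcbB : c * b ≤ B := by
            apply le_trans ?_ hBc
            nlinarith [mul_nonneg hc.le hb.le, mul_nonneg (mul_nonneg hc.le hb.le)
              (sub_nonneg.mpr hCm1), mul_nonneg hc.le (sub_nonneg.mpr hCm1)]
          have h1 : c * b * δ ≤ ε / 3 := by
            calc c * b * δ ≤ B * δ := mul_le_mul_of_nonneg_right hcbB hδ0.le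
              _ = ε / 3 := by
                rw [hδdef]
                field_simp
          have hint_nn : 0 ≤ ∫ ω, tail ω ∂μ := integral_nonneg htail_nn
          have h2 : c * b * (∫ ω, tail ω ∂μ) ≤ ε / 3 := by
            have hKε : 3 * B * Cm ≤ K * ε := (div_le_iff₀ hε0).mp hKlb
            have hCmK : Cm / K ≤ ε / (3 * B) := by
              rw [div_le_div_iff₀ hK0 h3B]
              linarith
            calc c * b * (∫ ω, tail ω ∂μ) ≤ B * (Cm / K) :=
                  mul_le_mul hcbB htail_int_le hint_nn hB0.le
              _ ≤ B * (ε / (3 * B)) := mul_le_mul_of_nonneg_left hCmK hB0.le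
              _ = ε / 3 := by
                field_simp
          have hsplit : c * b * (δ + ∫ ω, tail ω ∂μ)
              = c * b * δ + c * b * (∫ ω, tail ω ∂μ) := by ring
          rw [hsplit]
          linarith
  -- assemble
  calc |(∫ ω, φ (s * Y ω) ∂μ) - ∑ i ∈ Finset.range N, ww i * R (s * tt i)|
      ≤ |(∫ ω, φ (s * Y ω) ∂μ) - ∫ ω, R (s * Y ω) ∂μ|
        + |(∫ ω, R (s * Y ω) ∂μ) - ∑ i ∈ Finset.range N, ww i * R (s * tt i)| :=
        abs_sub_le _ _ _
    _ ≤ ε / 3 + (ε / 3 + ε / 3) := by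
        apply add_le_add hstep1
        rw [← hsum_eq s]
        exact hstep2
    _ = ε := by ring
end

section
/- Let d ∈ ℕ, D > 0, b > 0, Λ ≥ 0, let X be an ℝ^d-valued random vector with E[e^{2X_i}] < ∞ for i = 1,…,d, let g: (0,∞)^d → ℝ be Lipschitz continuous with Lipschitz constant Λ with respect to the Euclidean norm, and let X^D = (min(X₁,D),…,min(X_d,D)). Then for every s ∈ (0,b]^d: | E[g(s₁e^{X_1},…,s_de^{X_d})] − E[g(s₁e^{X^D_1},…,s_de^{X^D_d})] | ≤ 2 b Λ e^{−D} Σ_{i=1}^d E[e^{2X_i}]. -/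
open MeasureTheory

lemma sqrt_sum_sq_le_sum_abs {d : ℕ} (a : Fin d → ℝ) :
    Real.sqrt (∑ i, a i ^ 2) ≤ ∑ i, |a i| := by
  rw [show (∑ i, a i ^ 2) = ∑ i, |a i| ^ 2 by simp [sq_abs]]
  calc Real.sqrt (∑ i, |a i| ^ 2) ≤ Real.sqrt ((∑ i, |a i|) ^ 2) := by
        apply Real.sqrt_le_sqrt
        exact Finset.sum_sq_le_sq_sum_of_nonneg (fun i _ => abs_nonneg _)
    _ = ∑ i, |a i| := Real.sqrt_sq (Finset.sum_nonneg fun i _ => abs_nonneg _)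

lemma exp_sub_exp_min_le (x D : ℝ) :
    Real.exp x - Real.exp (min x D) ≤ Real.exp (-D) * Real.exp (2 * x) := by
  rw [← Real.exp_add]
  rcases le_or_gt x D with h | h
  · rw [min_eq_left h]
    have := Real.exp_pos (-D + 2 * x)
    linarith
  · rw [min_eq_right h.le]
    have h1 : Real.exp x ≤ Real.exp (-D + 2 * x) := Real.exp_le_exp.mpr (by linarith)
    have := Real.exp_pos D
    linarith

/-- The truncation (cut-off) estimate, Step 2 in the proof of Theorem 5.1: capping the
log-returns at level `D` changes the expectation of a Lipschitz function of the prices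
by at most `2 b Λ e^{-D} Σ_i E[e^{2X_i}]`. -/
theorem statement15
    {Ω : Type*} [MeasurableSpace Ω] (μ : Measure Ω) [IsProbabilityMeasure μ]
    (d : ℕ) (hd : 0 < d) (D b Λ : ℝ) (hD : 0 < D) (hb : 0 < b) (hΛ : 0 ≤ Λ)
    (X : Ω → (Fin d → ℝ)) (hX : Measurable X)
    (hmom : ∀ i : Fin d, Integrable (fun ω => Real.exp (2 * X ω i)) μ)
    (g : (Fin d → ℝ) → ℝ)
    (hg : ∀ x y : Fin d → ℝ, (∀ i, 0 < x i) → (∀ i, 0 < y i) →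
      |g x - g y| ≤ Λ * Real.sqrt (∑ i, (x i - y i) ^ 2)) :
    ∀ s : Fin d → ℝ, (∀ i, 0 < s i ∧ s i ≤ b) →
      |(∫ ω, g (fun i => s i * Real.exp (X ω i)) ∂μ)
          - (∫ ω, g (fun i => s i * Real.exp (min (X ω i) D)) ∂μ)|
        ≤ 2 * b * Λ * Real.exp (-D)
            * ∑ i : Fin d, ∫ ω, Real.exp (2 * X ω i) ∂μ := by
  intro s hs
  set U : Set (Fin d → ℝ) := {x | ∀ i, 0 < x i} with hUdef
  -- continuity of g on U
  have hgU : ContinuousOn g U := by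
    rw [show U = {x : Fin d → ℝ | ∀ i, 0 < x i} from rfl]
    have : LipschitzOnWith ⟨Λ * Real.sqrt d, by positivity⟩ g U := by
      refine lipschitzOnWith_iff_dist_le_mul.mpr ?_
      intro x hx y hy
      rw [Real.dist_eq]
      calc |g x - g y| ≤ Λ * Real.sqrt (∑ i, (x i - y i) ^ 2) := hg x y hx hy
        _ ≤ Λ * (Real.sqrt d * dist x y) := by
            apply mul_le_mul_of_nonneg_left _ hΛ
            have h1 : (∑ i, (x i - y i) ^ 2) ≤ (d : ℝ) * dist x y ^ 2 := by
              calc (∑ i, (x i - y i) ^ 2) ≤ ∑ _i : Fin d, dist x y ^ 2 := by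
                    apply Finset.sum_le_sum
                    intro i _
                    have := dist_le_pi_dist x y i
                    rw [Real.dist_eq] at this
                    calc (x i - y i) ^ 2 = |x i - y i| ^ 2 := (sq_abs _).symm
                      _ ≤ dist x y ^ 2 := by
                          apply pow_le_pow_left₀ (abs_nonneg _) this
                _ = (d : ℝ) * dist x y ^ 2 := by simp [mul_comm]
            calc Real.sqrt (∑ i, (x i - y i) ^ 2) ≤ Real.sqrt ((d : ℝ) * dist x y ^ 2) :=
                  Real.sqrt_le_sqrt h1
              _ = Real.sqrt d * dist x y := by
                  rw [Real.sqrt_mul (Nat.cast_nonneg d), Real.sqrt_sq dist_nonneg]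
        _ = (⟨Λ * Real.sqrt d, by positivity⟩ : NNReal) * dist x y := by push_cast; ring
    exact this.continuousOn
  have hgUm : Measurable (U.restrict g) := (hgU.restrict).measurable
  -- the two price processes
  set f : Ω → Fin d → ℝ := fun ω i => s i * Real.exp (X ω i) with hfdef
  set fD : Ω → Fin d → ℝ := fun ω i => s i * Real.exp (min (X ω i) D) with hfDdef
  have hXi : ∀ i : Fin d, Measurable fun ω => X ω i := fun i =>
    (measurable_pi_apply i).comp hX
  have hfm : Measurable f :=
    measurable_pi_lambda _ fun i => measurable_const.mul ((hXi i).exp)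
  have hfDm : Measurable fD :=
    measurable_pi_lambda _ fun i => measurable_const.mul (((hXi i).min measurable_const).exp)
  have hfU : ∀ ω, f ω ∈ U := fun ω i => by
    exact mul_pos (hs i).1 (Real.exp_pos _)
  have hfDU : ∀ ω, fD ω ∈ U := fun ω i => by
    exact mul_pos (hs i).1 (Real.exp_pos _)
  -- measurability of the compositions
  have hcomp : ∀ (h : Ω → Fin d → ℝ), Measurable h → (∀ ω, h ω ∈ U) →
      Measurable fun ω => g (h ω) := by
    intro h hm hmem
    have : (fun ω => g (h ω)) = (U.restrict g) ∘ (fun ω => (⟨h ω, hmem ω⟩ : U)) := rfl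
    rw [this]
    exact hgUm.comp (Measurable.subtype_mk hm)
  have hgfm : Measurable fun ω => g (f ω) := hcomp f hfm hfU
  have hgfDm : Measurable fun ω => g (fD ω) := hcomp fD hfDm hfDU
  -- integrability of exp(X_i)
  have hexpXi : ∀ i : Fin d, Integrable (fun ω => Real.exp (X ω i)) μ := by
    intro i
    apply Integrable.mono' ((integrable_const 1).add (hmom i))
      ((hXi i).exp.aestronglyMeasurable)
    filter_upwards with ω
    simp only [Pi.add_apply]
    rw [Real.norm_eq_abs, abs_of_pos (Real.exp_pos _)]
    rcases le_or_gt (X ω i) 0 with h | h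
    · have := Real.exp_le_one_iff.mpr h
      have := Real.exp_pos (2 * X ω i)
      linarith
    · have : Real.exp (X ω i) ≤ Real.exp (2 * X ω i) := by
        apply Real.exp_le_exp.mpr; linarith
      have := Real.exp_pos (X ω i)
      linarith
  -- a generic positivity-based bound on |g (h ω)|
  have habs : ∀ (x : Fin d → ℝ), x ∈ U → |g x| ≤ |g 1| + Λ * ∑ i, (x i + 1) := by
    intro x hx
    have h1 : |g x - g 1| ≤ Λ * Real.sqrt (∑ i, (x i - 1) ^ 2) :=
      hg x 1 hx (fun i => one_pos)
    have h2 : Real.sqrt (∑ i, (x i - (1 : Fin d → ℝ) i) ^ 2) ≤ ∑ i, (x i + 1) := by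
      calc Real.sqrt (∑ i, (x i - (1 : Fin d → ℝ) i) ^ 2) ≤ ∑ i, |x i - 1| :=
            sqrt_sum_sq_le_sum_abs _
        _ ≤ ∑ i, (x i + 1) := by
            apply Finset.sum_le_sum
            intro i _
            rw [abs_sub_le_iff]
            constructor <;> [skip; skip] <;> nlinarith [hx i]
    calc |g x| ≤ |g x - g 1| + |g 1| := by
          have := abs_sub_abs_le_abs_sub (g x) (g 1)
          have := abs_add_le (g x - g 1) (g 1)
          calc |g x| = |g x - g 1 + g 1| := by ring_nf
            _ ≤ |g x - g 1| + |g 1| := abs_add_le _ _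
      _ ≤ Λ * Real.sqrt (∑ i, (x i - (1 : Fin d → ℝ) i) ^ 2) + |g 1| := by
          have : (∑ i, (x i - (1 : Fin d → ℝ) i) ^ 2) = ∑ i, (x i - 1) ^ 2 := by
            simp
          rw [this]; linarith
      _ ≤ |g 1| + Λ * ∑ i, (x i + 1) := by
          have := mul_le_mul_of_nonneg_left h2 hΛ
          linarith
  -- integrability of g ∘ f
  have hgf_int : Integrable (fun ω => g (f ω)) μ := by
    apply Integrable.mono'
      (g := fun ω => |g 1| + Λ * ∑ i, (b * Real.exp (X ω i) + 1))
    · apply (integrable_const _).add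
      apply Integrable.const_mul
      apply integrable_finset_sum
      intro i _
      exact ((hexpXi i).const_mul b).add (integrable_const 1)
    · exact hgfm.aestronglyMeasurable
    · filter_upwards with ω
      rw [Real.norm_eq_abs]
      calc |g (f ω)| ≤ |g 1| + Λ * ∑ i, (f ω i + 1) := habs _ (hfU ω)
        _ ≤ |g 1| + Λ * ∑ i, (b * Real.exp (X ω i) + 1) := by
            have : (∑ i, (f ω i + 1)) ≤ ∑ i, (b * Real.exp (X ω i) + 1) := by
              apply Finset.sum_le_sum
              intro i _
              have : s i * Real.exp (X ω i) ≤ b * Real.exp (X ω i) :=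
                mul_le_mul_of_nonneg_right (hs i).2 (Real.exp_pos _).le
              simp only [hfdef]
              linarith
            nlinarith
  have hgfD_int : Integrable (fun ω => g (fD ω)) μ := by
    apply Integrable.mono' (g := fun _ => |g 1| + Λ * ∑ i : Fin d, (b * Real.exp D + 1))
    · exact integrable_const _
    · exact hgfDm.aestronglyMeasurable
    · filter_upwards with ω
      rw [Real.norm_eq_abs]
      calc |g (fD ω)| ≤ |g 1| + Λ * ∑ i, (fD ω i + 1) := habs _ (hfDU ω)
        _ ≤ |g 1| + Λ * ∑ i : Fin d, (b * Real.exp D + 1) := by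
            have : (∑ i, (fD ω i + 1)) ≤ ∑ i : Fin d, (b * Real.exp D + 1) := by
              apply Finset.sum_le_sum
              intro i _
              have h1 : Real.exp (min (X ω i) D) ≤ Real.exp D :=
                Real.exp_le_exp.mpr (min_le_right _ _)
              have h2 : s i * Real.exp (min (X ω i) D) ≤ b * Real.exp D := by
                apply mul_le_mul (hs i).2 h1 (Real.exp_pos _).le hb.le
              simp only [hfDdef]
              linarith
            nlinarith
  -- pointwise bound on the difference
  have hpt : ∀ ω, |g (f ω) - g (fD ω)| ≤
      b * Λ * Real.exp (-D) * ∑ i, Real.exp (2 * X ω i) := by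
    intro ω
    calc |g (f ω) - g (fD ω)| ≤ Λ * Real.sqrt (∑ i, (f ω i - fD ω i) ^ 2) :=
          hg _ _ (hfU ω) (hfDU ω)
      _ ≤ Λ * ∑ i, |f ω i - fD ω i| :=
          mul_le_mul_of_nonneg_left (sqrt_sum_sq_le_sum_abs _) hΛ
      _ ≤ Λ * ∑ i, b * (Real.exp (-D) * Real.exp (2 * X ω i)) := by
          apply mul_le_mul_of_nonneg_left _ hΛ
          apply Finset.sum_le_sum
          intro i _
          have hmin : Real.exp (min (X ω i) D) ≤ Real.exp (X ω i) :=
            Real.exp_le_exp.mpr (min_le_left _ _)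
          have habs' : |f ω i - fD ω i| =
              s i * (Real.exp (X ω i) - Real.exp (min (X ω i) D)) := by
            simp only [hfdef, hfDdef]
            rw [← mul_sub, abs_of_nonneg]
            apply mul_nonneg (hs i).1.le
            linarith
          rw [habs']
          have h1 := exp_sub_exp_min_le (X ω i) D
          calc s i * (Real.exp (X ω i) - Real.exp (min (X ω i) D))
              ≤ b * (Real.exp (X ω i) - Real.exp (min (X ω i) D)) := by
                apply mul_le_mul_of_nonneg_right (hs i).2; linarith
            _ ≤ b * (Real.exp (-D) * Real.exp (2 * X ω i)) :=
                mul_le_mul_of_nonneg_left h1 hb.le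
      _ = b * Λ * Real.exp (-D) * ∑ i, Real.exp (2 * X ω i) := by
          rw [← Finset.mul_sum, ← Finset.mul_sum]; ring
  -- assemble
  have hsum_int : Integrable (fun ω => ∑ i, Real.exp (2 * X ω i)) μ :=
    integrable_finset_sum _ fun i _ => hmom i
  have key : |(∫ ω, g (f ω) ∂μ) - (∫ ω, g (fD ω) ∂μ)| ≤
      b * Λ * Real.exp (-D) * ∑ i : Fin d, ∫ ω, Real.exp (2 * X ω i) ∂μ := by
    rw [← integral_sub hgf_int hgfD_int]
    calc |∫ ω, (g (f ω) - g (fD ω)) ∂μ| ≤ ∫ ω, |g (f ω) - g (fD ω)| ∂μ :=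
          by
          simpa [Real.norm_eq_abs] using
            norm_integral_le_integral_norm (μ := μ) fun ω => g (f ω) - g (fD ω)
      _ ≤ ∫ ω, b * Λ * Real.exp (-D) * ∑ i, Real.exp (2 * X ω i) ∂μ := by
          apply integral_mono ((hgf_int.sub hgfD_int).abs) (hsum_int.const_mul _)
          intro ω
          exact hpt ω
      _ = b * Λ * Real.exp (-D) * ∑ i : Fin d, ∫ ω, Real.exp (2 * X ω i) ∂μ := by
          rw [integral_const_mul, integral_finset_sum]
          exact fun i _ => hmom i
  have hnn : 0 ≤ ∑ i : Fin d, ∫ ω, Real.exp (2 * X ω i) ∂μ :=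
    Finset.sum_nonneg fun i _ => integral_nonneg fun ω => (Real.exp_pos _).le
  calc |(∫ ω, g (fun i => s i * Real.exp (X ω i)) ∂μ)
      - (∫ ω, g (fun i => s i * Real.exp (min (X ω i) D)) ∂μ)|
      ≤ b * Λ * Real.exp (-D) * ∑ i : Fin d, ∫ ω, Real.exp (2 * X ω i) ∂μ := key
    _ ≤ 2 * b * Λ * Real.exp (-D) * ∑ i : Fin d, ∫ ω, Real.exp (2 * X ω i) ∂μ := by
        have h1 : 0 ≤ b * Λ * Real.exp (-D) * ∑ i : Fin d, ∫ ω, Real.exp (2 * X ω i) ∂μ := by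
          positivity
        nlinarith [Real.exp_pos (-D)]
end
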